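/- arXiv:1612.00160 — 6 statements merged into one kernel-verified Lean document; each statement's English description precedes it below -/
import Mathlib

section
/- Let (Ω, F, P) be a probability space, h > 0, θ ∈ ℝ, and B : [0,∞) → Ω → ℝ a process with B_0 = 0 a.s., each B_t square integrable and centered (E[B_t] = 0). Define γ(k) = E[(B_{(k+1)h} - B_{kh}) B_h] for k ≥ 0, and suppose: (i) E[(B_{lh} - B_{(l-1)h})(B_{mh} - B_{(m-1)h})] = γ(|l - m|) for all integers l, m ≥ 1; (ii) for each N the N×N matrix Γ^{(N)} = (γ(|l-m|))_{l,m=1}^N is positive definite; (iii) γ(k) → 0 as k → ∞. Let X_t = θt + B_t, ΔX^{(N)} = (X_{kh} - X_{(k-1)h})_{k=1}^N, z = (h,...,h)ᵀ ∈ ℝ^N, and θ̂^{(N)} = (zᵀ (Γ^{(N)})⁻¹ ΔX^{(N)})/(zᵀ (Γ^{(N)})⁻¹ z). Then E[(θ̂^{(N)} - θ)²] → 0 as N → ∞, i.e. the maximum likelihood estimator is mean-square consistent. -/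
open Matrix MeasureTheory Filter

open scoped ENNReal

lemma memL2_mul_int {Ω : Type*} [MeasureSpace Ω] {P : Measure Ω} {f g : Ω → ℝ}
    (hf : MemLp f 2 P) (hg : MemLp g 2 P) : Integrable (fun ω => f ω * g ω) P := by
  have h2 : (1 : ℝ≥0∞) / 1 = 1 / 2 + 1 / 2 := by
    rw [ENNReal.add_halves, one_div_one]
  have := hf.smul hg (r := 1)
  rw [← memLp_one_iff_integrable]
  convert this using 1
  funext ω
  simp [mul_comm]

lemma symm_bilin {N : ℕ} {A : Matrix (Fin N) (Fin N) ℝ} (hA : Aᵀ = A) (a b : Fin N → ℝ) :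
    a ⬝ᵥ A *ᵥ b = b ⬝ᵥ A *ᵥ a := by
  have hAe : ∀ i j, A i j = A j i := fun i j => by conv_rhs => rw [← hA, Matrix.transpose_apply]
  simp only [dotProduct, mulVec, Finset.mul_sum]
  rw [Finset.sum_comm]
  refine Finset.sum_congr rfl fun i _ => Finset.sum_congr rfl fun j _ => ?_
  rw [hAe j i]; ring

lemma pd_nonneg {N : ℕ} {A : Matrix (Fin N) (Fin N) ℝ} (hA : A.PosDef) (x : Fin N → ℝ) :
    0 ≤ x ⬝ᵥ A *ᵥ x := by
  rcases eq_or_ne x 0 with rfl | hx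
  · simp
  · have := hA.dotProduct_mulVec_pos hx
    simpa using this.le

lemma pd_cs {N : ℕ} {A : Matrix (Fin N) (Fin N) ℝ} (hA : A.PosDef) (a b : Fin N → ℝ) :
    (a ⬝ᵥ A *ᵥ b) ^ 2 ≤ (a ⬝ᵥ A *ᵥ a) * (b ⬝ᵥ A *ᵥ b) := by
  have hsymm : Aᵀ = A := hA.isHermitian
  have hq : ∀ t : ℝ, 0 ≤ (b ⬝ᵥ A *ᵥ b) * (t * t) + (2 * (a ⬝ᵥ A *ᵥ b)) * t + (a ⬝ᵥ A *ᵥ a) := by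
    intro t
    have h0 := pd_nonneg hA (a + t • b)
    have hs : b ⬝ᵥ A *ᵥ a = a ⬝ᵥ A *ᵥ b := symm_bilin hsymm b a
    simp only [add_dotProduct, dotProduct_add, mulVec_add, mulVec_smul, smul_dotProduct,
      dotProduct_smul, smul_eq_mul] at h0
    rw [hs] at h0
    ring_nf at h0 ⊢
    linarith [h0]
  have hd := discrim_le_zero hq
  rw [discrim] at hd
  nlinarith [hd]

lemma dist_sum_le (f : ℕ → ℝ) (hf : ∀ d, 0 ≤ f d) (k N : ℕ) (hk : k < N) :
    ∑ j ∈ Finset.range N, f (Nat.dist k j) ≤ 2 * ∑ d ∈ Finset.range N, f d := by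
  have hkN : k + 1 ≤ N := hk
  rw [← Finset.sum_range_add_sum_Ico _ hkN, two_mul]
  gcongr
  · calc ∑ j ∈ Finset.range (k + 1), f (Nat.dist k j)
        = ∑ j ∈ Finset.range (k + 1), f (k - j) := by
          refine Finset.sum_congr rfl fun j hj => ?_
          rw [Nat.dist_eq_sub_of_le_right (Nat.lt_succ_iff.mp (Finset.mem_range.mp hj))]
      _ = ∑ d ∈ Finset.range (k + 1), f d := by
          have := Finset.sum_range_reflect (fun d => f d) (k + 1)
          simpa using this
      _ ≤ ∑ d ∈ Finset.range N, f d := by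
          apply Finset.sum_le_sum_of_subset_of_nonneg (Finset.range_subset_range.mpr hkN)
          exact fun d _ _ => hf d
  · calc ∑ j ∈ Finset.Ico (k + 1) N, f (Nat.dist k j)
        = ∑ j ∈ Finset.Ico (k + 1) N, f (j - k) := by
          refine Finset.sum_congr rfl fun j hj => ?_
          have := (Finset.mem_Ico.mp hj).1
          rw [Nat.dist_eq_sub_of_le (by omega)]
      _ = ∑ d ∈ (Finset.Ico (k + 1) N).image (· - k), f d := by
          rw [Finset.sum_image]
          intro a ha b hb hab
          have := (Finset.mem_Ico.mp ha).1
          have := (Finset.mem_Ico.mp hb).1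
          simp only at hab
          omega
      _ ≤ ∑ d ∈ Finset.range N, f d := by
          apply Finset.sum_le_sum_of_subset_of_nonneg
          · intro d hd
            obtain ⟨j, hj, rfl⟩ := Finset.mem_image.mp hd
            have := Finset.mem_Ico.mp hj
            exact Finset.mem_range.mpr (by omega)
          · exact fun d _ _ => hf d

/-- Mean-square consistency of the maximum likelihood estimator of the drift `θ`
in the model `X_t = θt + B_t`, observed on the regular grid `kh`, `k = 1,…,N`. -/
theorem mle_mean_square_consistent
    {Ω : Type*} [MeasureSpace Ω] (P : Measure Ω) [IsProbabilityMeasure P]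
    (h θ : ℝ) (hh : 0 < h)
    (B : ℝ → Ω → ℝ)
    (hB0 : ∀ᵐ ω ∂P, B 0 ω = 0)
    (hL2 : ∀ t : ℝ, 0 ≤ t → MemLp (B t) 2 P)
    (hcentered : ∀ t : ℝ, 0 ≤ t → ∫ ω, B t ω ∂P = 0)
    (γ : ℕ → ℝ)
    (hγdef : ∀ k : ℕ,
      γ k = ∫ ω, (B ((k + 1 : ℕ) * h) ω - B (k * h) ω) * B h ω ∂P)
    (hcov : ∀ l m : ℕ, 1 ≤ l → 1 ≤ m →
      ∫ ω, (B (l * h) ω - B ((l - 1 : ℕ) * h) ω) *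
          (B (m * h) ω - B ((m - 1 : ℕ) * h) ω) ∂P = γ (Nat.dist l m))
    (Γ : (N : ℕ) → Matrix (Fin N) (Fin N) ℝ)
    (hΓdef : ∀ (N : ℕ) (l m : Fin N), Γ N l m = γ (Nat.dist l m))
    (hΓpos : ∀ N : ℕ, (Γ N).PosDef)
    (hγ0 : Tendsto γ atTop (nhds 0))
    (X : ℝ → Ω → ℝ) (hX : ∀ t ω, X t ω = θ * t + B t ω)
    (ΔX : (N : ℕ) → Ω → Fin N → ℝ)
    (hΔX : ∀ (N : ℕ) (ω : Ω) (k : Fin N),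
      ΔX N ω k = X ((k + 1 : ℕ) * h) ω - X ((k : ℕ) * h) ω)
    (z : (N : ℕ) → Fin N → ℝ) (hz : ∀ (N : ℕ) (k : Fin N), z N k = h)
    (θhat : (N : ℕ) → Ω → ℝ)
    (hθhat : ∀ (N : ℕ) (ω : Ω), θhat N ω =
      (z N ⬝ᵥ (Γ N)⁻¹ *ᵥ ΔX N ω) / (z N ⬝ᵥ (Γ N)⁻¹ *ᵥ z N)) :
    Tendsto (fun N : ℕ => ∫ ω, (θhat N ω - θ) ^ 2 ∂P) atTop (nhds 0) := by
  -- the dominating sequence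
  have hgto : Tendsto (fun N : ℕ => (2 / h ^ 2) *
      ((N : ℝ)⁻¹ * ∑ d ∈ Finset.range N, |γ d|)) atTop (nhds 0) := by
    have habs : Tendsto (fun d => |γ d|) atTop (nhds 0) := by simpa using hγ0.abs
    have hc := habs.cesaro
    simpa using hc.const_mul (2 / h ^ 2)
  apply squeeze_zero' ?_ ?_ hgto
  · filter_upwards with N
    exact integral_nonneg fun ω => sq_nonneg _
  filter_upwards [eventually_ge_atTop 1] with N hN
  -- notation
  set M := Γ N with hM
  have hpd : M.PosDef := hΓpos N
  have hdet : IsUnit M.det := hpd.det_pos.ne'.isUnit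
  have hsymm : Mᵀ = M := hpd.isHermitian
  have hinvsymm : (M⁻¹)ᵀ = M⁻¹ := by rw [Matrix.transpose_nonsing_inv, hsymm]
  have hpdinv : (M⁻¹).PosDef := hpd.inv
  set v : Fin N → ℝ := M⁻¹ *ᵥ z N with hv
  set D : ℝ := z N ⬝ᵥ v with hDdef
  have hz0 : z N ≠ 0 := by
    intro hc
    have := congrFun hc ⟨0, hN⟩
    rw [hz] at this
    exact hh.ne' this
  have hD : 0 < D := by
    have := hpdinv.dotProduct_mulVec_pos hz0
    simpa [hDdef, hv] using this
  -- increments of B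
  set w : Ω → Fin N → ℝ :=
    fun ω k => B (((k : ℕ) + 1 : ℕ) * h) ω - B ((k : ℕ) * h) ω with hw
  have hmem : ∀ k : Fin N, MemLp (fun ω => w ω k) 2 P := by
    intro k
    exact (hL2 _ (by positivity)).sub (hL2 _ (by positivity))
  have hint : ∀ k j : Fin N, Integrable (fun ω => w ω k * w ω j) P :=
    fun k j => memL2_mul_int (hmem k) (hmem j)
  have hcovint : ∀ k j : Fin N, ∫ ω, w ω k * w ω j ∂P = M k j := by
    intro k j
    have hc := hcov ((k : ℕ) + 1) ((j : ℕ) + 1) (Nat.le_add_left 1 _) (Nat.le_add_left 1 _)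
    simp only [Nat.add_sub_cancel] at hc
    rw [hM, hΓdef]
    rw [show Nat.dist (k : ℕ) (j : ℕ) = Nat.dist ((k : ℕ) + 1) ((j : ℕ) + 1) from
      (Nat.dist_succ_succ).symm, ← hc]
  -- expectation of the square of a linear form in the increments
  have key : ∀ u : Fin N → ℝ, ∫ ω, (u ⬝ᵥ w ω) ^ 2 ∂P = u ⬝ᵥ M *ᵥ u := by
    intro u
    have expand : ∀ ω, (u ⬝ᵥ w ω) ^ 2 =
        ∑ k, ∑ j, (u k * u j) * (w ω k * w ω j) := by
      intro ω
      simp only [dotProduct, pow_two, Finset.sum_mul_sum]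
      exact Finset.sum_congr rfl fun k _ => Finset.sum_congr rfl fun j _ => by ring
    simp_rw [expand]
    rw [integral_finset_sum _ (fun k _ =>
      integrable_finset_sum _ (fun j _ => (hint k j).const_mul _))]
    have hstep : ∀ k : Fin N,
        ∫ ω, ∑ j, (u k * u j) * (w ω k * w ω j) ∂P = ∑ j, (u k * u j) * M k j := by
      intro k
      rw [integral_finset_sum _ fun j _ => (hint k j).const_mul _]
      exact Finset.sum_congr rfl fun j _ => by rw [MeasureTheory.integral_const_mul, hcovint]
    simp_rw [hstep]
    simp only [dotProduct, mulVec, Finset.mul_sum]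
    exact Finset.sum_congr rfl fun k _ => Finset.sum_congr rfl fun j _ => by ring
  -- pointwise identity for the estimator
  have hvec : ∀ u : Fin N → ℝ, z N ⬝ᵥ M⁻¹ *ᵥ u = v ⬝ᵥ u := by
    intro u
    rw [dotProduct_mulVec, ← hinvsymm, vecMul_transpose]
  have hpt : ∀ ω, θhat N ω - θ = (v ⬝ᵥ w ω) / D := by
    intro ω
    have hΔ : ΔX N ω = θ • z N + w ω := by
      funext k
      simp only [hΔX, hX, hz, hw, Pi.add_apply, Pi.smul_apply, smul_eq_mul]
      push_cast
      ring
    rw [hθhat, hΔ]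
    simp only [← hM]
    rw [mulVec_add, mulVec_smul, dotProduct_add, dotProduct_smul, smul_eq_mul,
      hvec (z N), hvec (w ω), dotProduct_comm v (z N), ← hDdef]
    field_simp
    ring
  -- the mean squared error equals 1/D
  have hMv : M *ᵥ v = z N := by
    rw [hv, mulVec_mulVec, Matrix.mul_nonsing_inv _ hdet, one_mulVec]
  have hEq : ∫ ω, (θhat N ω - θ) ^ 2 ∂P = 1 / D := by
    simp_rw [hpt]
    simp only [div_pow]
    rw [integral_div, key v, hMv, dotProduct_comm v (z N), ← hDdef, pow_two, ← div_div,
      div_self hD.ne']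
  rw [hEq]
  -- Cauchy–Schwarz bound
  set T : ℝ := ∑ d ∈ Finset.range N, |γ d| with hT
  have hTnn : 0 ≤ T := Finset.sum_nonneg fun d _ => abs_nonneg _
  have hNpos : (0 : ℝ) < N := by exact_mod_cast hN
  have hcs := pd_cs hpdinv (z N) (M *ᵥ z N)
  rw [mulVec_mulVec, Matrix.nonsing_inv_mul _ hdet, one_mulVec] at hcs
  have hcs' : (z N ⬝ᵥ z N) ^ 2 ≤ D * (z N ⬝ᵥ M *ᵥ z N) := by
    rw [← hv, ← hDdef, dotProduct_comm (M *ᵥ z N) (z N)] at hcs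
    exact hcs
  have hzz : z N ⬝ᵥ z N = (N : ℝ) * h ^ 2 := by
    simp [dotProduct, hz, Finset.sum_const, pow_two, mul_comm]
  have hSle : z N ⬝ᵥ M *ᵥ z N ≤ h ^ 2 * (2 * N * T) := by
    have h1 : z N ⬝ᵥ M *ᵥ z N = h ^ 2 * ∑ k : Fin N, ∑ j : Fin N, γ (Nat.dist (k : ℕ) (j : ℕ)) := by
      simp only [dotProduct, mulVec, hz, hM, hΓdef, Finset.mul_sum]
      exact Finset.sum_congr rfl fun k _ => Finset.sum_congr rfl fun j _ => by ring
    rw [h1]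
    have h2 : ∑ k : Fin N, ∑ j : Fin N, γ (Nat.dist (k : ℕ) (j : ℕ)) ≤ 2 * N * T := by
      have hbd : ∀ k : Fin N, ∑ j : Fin N, γ (Nat.dist (k : ℕ) (j : ℕ)) ≤ 2 * T := by
        intro k
        calc ∑ j : Fin N, γ (Nat.dist (k : ℕ) (j : ℕ))
            ≤ ∑ j : Fin N, |γ (Nat.dist (k : ℕ) (j : ℕ))| :=
              Finset.sum_le_sum fun j _ => le_abs_self _
          _ = ∑ j ∈ Finset.range N, |γ (Nat.dist (k : ℕ) j)| :=
              Fin.sum_univ_eq_sum_range (fun j => |γ (Nat.dist (k : ℕ) j)|) N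
          _ ≤ 2 * T := dist_sum_le (fun d => |γ d|) (fun d => abs_nonneg _) _ N k.isLt
      calc ∑ k : Fin N, ∑ j : Fin N, γ (Nat.dist (k : ℕ) (j : ℕ))
          ≤ ∑ _k : Fin N, 2 * T := Finset.sum_le_sum fun k _ => hbd k
        _ = 2 * N * T := by
            rw [Finset.sum_const, Finset.card_univ, Fintype.card_fin, nsmul_eq_mul]
            ring
    nlinarith [sq_nonneg h]
  have hfinal : ((N : ℝ) * h ^ 2) ^ 2 ≤ D * (h ^ 2 * (2 * N * T)) := by
    calc ((N : ℝ) * h ^ 2) ^ 2 = (z N ⬝ᵥ z N) ^ 2 := by rw [hzz]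
      _ ≤ D * (z N ⬝ᵥ M *ᵥ z N) := hcs'
      _ ≤ D * (h ^ 2 * (2 * N * T)) := by
          exact mul_le_mul_of_nonneg_left hSle hD.le
  have hkey2 : (N : ℝ) * h ^ 2 ≤ 2 * T * D := by
    nlinarith [mul_pos hNpos (pow_pos hh 2)]
  rw [div_le_iff₀ hD]
  calc (1 : ℝ) ≤ (2 * T * D) / ((N : ℝ) * h ^ 2) := (one_le_div (by positivity)).2 hkey2
    _ = 2 / h ^ 2 * ((N : ℝ)⁻¹ * T) * D := by
        rw [div_eq_mul_inv, div_eq_mul_inv, mul_inv]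
        ring
end

section
/- Under the same setup (centered square-integrable process B with B_0 = 0, positive definite increment covariance matrices Γ^{(N)}, estimators θ̂^{(N)} = (z_Nᵀ (Γ^{(N)})⁻¹ ΔX^{(N)})/(z_Nᵀ (Γ^{(N)})⁻¹ z_N) on the regular grid of mesh h), for all positive integers N₁ ≤ N₂ ≤ N₃ ≤ N₄, E[(θ̂^{(N₄)} - θ̂^{(N₃)})(θ̂^{(N₂)} - θ̂^{(N₁)})] = 0; that is, the sequence of estimators has uncorrelated increments. -/
open Matrix MeasureTheory

/-- The sequence of discrete maximum likelihood estimators has uncorrelated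
increments: for `N₁ ≤ N₂ ≤ N₃ ≤ N₄`,
`E[(θ̂^{(N₄)} − θ̂^{(N₃)})(θ̂^{(N₂)} − θ̂^{(N₁)})] = 0`. -/
theorem mle_uncorrelated_increments
    {Ω : Type*} [MeasureSpace Ω] (P : Measure Ω) [IsProbabilityMeasure P]
    (h θ : ℝ) (hh : 0 < h)
    (B : ℝ → Ω → ℝ)
    (hB0 : ∀ᵐ ω ∂P, B 0 ω = 0)
    (hL2 : ∀ t : ℝ, 0 ≤ t → MemLp (B t) 2 P)
    (hcentered : ∀ t : ℝ, 0 ≤ t → ∫ ω, B t ω ∂P = 0)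
    (Γ : (N : ℕ) → Matrix (Fin N) (Fin N) ℝ)
    (hΓdef : ∀ (N : ℕ) (l m : Fin N),
      Γ N l m = ∫ ω, (B ((l + 1 : ℕ) * h) ω - B ((l : ℕ) * h) ω) *
        (B ((m + 1 : ℕ) * h) ω - B ((m : ℕ) * h) ω) ∂P)
    (hΓpos : ∀ N : ℕ, (Γ N).PosDef)
    (z : (N : ℕ) → Fin N → ℝ) (hz : ∀ (N : ℕ) (k : Fin N), z N k = h)
    (ΔX : (N : ℕ) → Ω → Fin N → ℝ)
    (hΔX : ∀ (N : ℕ) (ω : Ω) (k : Fin N),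
      ΔX N ω k = θ * h + (B ((k + 1 : ℕ) * h) ω - B ((k : ℕ) * h) ω))
    (θhat : (N : ℕ) → Ω → ℝ)
    (hθhat : ∀ (N : ℕ) (ω : Ω), θhat N ω =
      (z N ⬝ᵥ (Γ N)⁻¹ *ᵥ ΔX N ω) / (z N ⬝ᵥ (Γ N)⁻¹ *ᵥ z N))
    (N₁ N₂ N₃ N₄ : ℕ) (hN₁ : 1 ≤ N₁) (h12 : N₁ ≤ N₂) (h23 : N₂ ≤ N₃)
    (h34 : N₃ ≤ N₄) :
    ∫ ω, (θhat N₄ ω - θhat N₃ ω) * (θhat N₂ ω - θhat N₁ ω) ∂P = 0 := by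
  classical
  -- increments
  set D : ℕ → Ω → ℝ := fun k ω => B (((k + 1 : ℕ) : ℝ) * h) ω - B (((k : ℕ) : ℝ) * h) ω with hD_def
  have hD : ∀ k : ℕ, MemLp (D k) 2 P := by
    intro k
    exact (hL2 _ (by positivity)).sub (hL2 _ (by positivity))
  have hInt : ∀ k l : ℕ, Integrable (fun ω => D k ω * D l ω) P := by
    intro k l
    have := ((hD l).smul (r := 1) (hD k) (hpqr := ⟨by rw [ENNReal.inv_two_add_inv_two, inv_one]⟩)).integrable le_rfl
    exact this
  set G : ℕ → ℕ → ℝ := fun k l => ∫ ω, D k ω * D l ω ∂P with hG_def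
  have hG : ∀ (N : ℕ) (k l : Fin N), Γ N k l = G (k : ℕ) (l : ℕ) := by
    intro N k l
    rw [hΓdef]
  -- normalization constants and weights
  set c : ℕ → ℝ := fun N => z N ⬝ᵥ (Γ N)⁻¹ *ᵥ z N with hc_def
  set w : (N : ℕ) → Fin N → ℝ := fun N => (Γ N)⁻¹ *ᵥ z N with hw_def
  have hcpos : ∀ N : ℕ, 1 ≤ N → 0 < c N := by
    intro N hN
    have hzne : z N ≠ 0 := by
      intro hzz
      have := congrFun hzz ⟨0, hN⟩
      rw [hz] at this
      exact hh.ne' this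
    exact ((hΓpos N).inv).dotProduct_mulVec_pos hzne
  have hsym : ∀ N : ℕ, ((Γ N)⁻¹)ᵀ = (Γ N)⁻¹ := by
    intro N
    have := ((hΓpos N).1.inv : ((Γ N)⁻¹).IsHermitian)
    simpa [Matrix.IsHermitian, Matrix.conjTranspose_eq_transpose_of_trivial] using this
  have hdot : ∀ (N : ℕ) (v : Fin N → ℝ), z N ⬝ᵥ (Γ N)⁻¹ *ᵥ v = w N ⬝ᵥ v := by
    intro N v
    rw [Matrix.dotProduct_mulVec, hw_def]
    congr 1
    rw [← hsym N, Matrix.vecMul_transpose]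
  have hΓw : ∀ N : ℕ, Γ N *ᵥ w N = z N := by
    intro N
    rw [hw_def]
    rw [Matrix.mulVec_mulVec, Matrix.mul_nonsing_inv _ ((hΓpos N).det_pos.ne'.isUnit) , Matrix.one_mulVec]
  have hΓsym : ∀ N : ℕ, (Γ N)ᵀ = Γ N := by
    intro N
    have := (hΓpos N).1
    simpa [Matrix.IsHermitian, Matrix.conjTranspose_eq_transpose_of_trivial] using this
  -- coefficients
  set a : ℕ → ℕ → ℝ := fun N k => if hk : k < N then w N ⟨k, hk⟩ / c N else 0 with ha_def
  have ha_zero : ∀ N k : ℕ, ¬ k < N → a N k = 0 := by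
    intro N k hk; simp [ha_def, hk]
  have ha_pos : ∀ (N : ℕ) (k : Fin N), a N (k : ℕ) = w N k / c N := by
    intro N k
    simp [ha_def, k.isLt]
  -- representation of the estimator
  have hcne : ∀ N : ℕ, 1 ≤ N → c N ≠ 0 := fun N hN => (hcpos N hN).ne'
  have hrep : ∀ N : ℕ, 1 ≤ N → N ≤ N₄ → ∀ ω : Ω,
      θhat N ω = θ + ∑ k ∈ Finset.range N₄, a N k * D k ω := by
    intro N hN hNle ω
    have hΔXv : ΔX N ω = θ • z N + fun k : Fin N => D (k : ℕ) ω := by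
      funext k
      simp [hΔX, hz, hD_def, Pi.add_apply, Pi.smul_apply, smul_eq_mul]
    have key : z N ⬝ᵥ (Γ N)⁻¹ *ᵥ ΔX N ω
        = θ * c N + w N ⬝ᵥ (fun k : Fin N => D (k : ℕ) ω) := by
      rw [hΔXv, Matrix.mulVec_add, dotProduct_add, Matrix.mulVec_smul,
        dotProduct_smul, smul_eq_mul, hdot, hdot]
      congr 1
      rw [show c N = z N ⬝ᵥ (Γ N)⁻¹ *ᵥ z N from rfl, hdot]
    rw [hθhat, key, show z N ⬝ᵥ (Γ N)⁻¹ *ᵥ z N = c N from rfl]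
    have hsum : ∑ k ∈ Finset.range N₄, a N k * D k ω
        = (w N ⬝ᵥ fun k : Fin N => D (k : ℕ) ω) / c N := by
      rw [← Finset.sum_subset (Finset.range_subset_range.mpr hNle)
        (fun x _ hx => by rw [ha_zero N x (by simpa using hx), zero_mul])]
      rw [← Fin.sum_univ_eq_sum_range (fun k => a N k * D k ω) N]
      rw [dotProduct, Finset.sum_div]
      exact Finset.sum_congr rfl fun k _ => by rw [ha_pos N k, div_mul_eq_mul_div]
    rw [hsum]
    field_simp [hcne N hN]
  have hN₂ : 1 ≤ N₂ := hN₁.trans h12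
  have hN₃ : 1 ≤ N₃ := hN₂.trans h23
  have hN₄ : 1 ≤ N₄ := hN₃.trans h34
  -- the key sum lemma
  have hkey : ∀ M N : ℕ, 1 ≤ N → N ≤ M → M ≤ N₄ →
      (∑ k ∈ Finset.range N₄, ∑ l ∈ Finset.range N₄, a M k * a N l * G k l) = 1 / c M := by
    intro M N hN hNM hMle
    have hM : 1 ≤ M := hN.trans hNM
    -- inner sum over k collapses
    have hcol : ∀ l : ℕ, l < M → (∑ k ∈ Finset.range N₄, a M k * G k l) = h / c M := by
      intro l hl
      have h1 : (∑ k ∈ Finset.range N₄, a M k * G k l)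
          = ∑ k ∈ Finset.range M, a M k * G k l := by
        rw [← Finset.sum_subset (Finset.range_subset_range.mpr hMle)
          (fun x _ hx => by rw [ha_zero M x (by simpa using hx), zero_mul])]
      have h2 : (∑ k ∈ Finset.range M, a M k * G k l)
          = (∑ k : Fin M, w M k * Γ M k ⟨l, hl⟩) / c M := by
        rw [← Fin.sum_univ_eq_sum_range (fun k => a M k * G k l) M, Finset.sum_div]
        refine Finset.sum_congr rfl fun k _ => ?_
        rw [ha_pos M k, hG M k ⟨l, hl⟩, div_mul_eq_mul_div]
      have h3 : (∑ k : Fin M, w M k * Γ M k ⟨l, hl⟩) = h := by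
        have hvm : (w M ᵥ* Γ M) ⟨l, hl⟩ = z M ⟨l, hl⟩ := by
          have hv : w M ᵥ* Γ M = Γ M *ᵥ w M := by
            conv_lhs => rw [← hΓsym M]
            rw [Matrix.vecMul_transpose]
          rw [hv, hΓw]
        rw [← hz M ⟨l, hl⟩, ← hvm]
        simp [Matrix.vecMul, dotProduct]
      rw [h1, h2, h3]
    -- collapse the double sum
    rw [Finset.sum_comm]
    have step : ∀ l ∈ Finset.range N₄,
        (∑ k ∈ Finset.range N₄, a M k * a N l * G k l) = a N l * (h / c M) := by
      intro l _
      by_cases hlN : l < N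
      · have : (∑ k ∈ Finset.range N₄, a M k * a N l * G k l)
            = a N l * ∑ k ∈ Finset.range N₄, a M k * G k l := by
          rw [Finset.mul_sum]
          exact Finset.sum_congr rfl fun k _ => by ring
        rw [this, hcol l (lt_of_lt_of_le hlN hNM)]
      · rw [ha_zero N l hlN]
        simp
    rw [Finset.sum_congr rfl step, ← Finset.sum_mul]
    have h1 : (∑ l ∈ Finset.range N₄, a N l) = ∑ l : Fin N, w N l / c N := by
      rw [← Finset.sum_subset (Finset.range_subset_range.mpr (hNM.trans hMle))
        (fun x _ hx => ha_zero N x (by simpa using hx))]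
      rw [← Fin.sum_univ_eq_sum_range (fun k => a N k) N]
      exact Finset.sum_congr rfl fun k _ => ha_pos N k
    have h2 : c N = ∑ l : Fin N, w N l * h := by
      rw [show c N = z N ⬝ᵥ (Γ N)⁻¹ *ᵥ z N from rfl, hdot]
      simp [dotProduct, hz]
    have h3 : (∑ l ∈ Finset.range N₄, a N l) * h = 1 := by
      rw [h1, ← Finset.sum_div, div_mul_eq_mul_div, Finset.sum_mul, ← h2,
        div_self (hcne N hN)]
    rw [mul_div_assoc', h3]
  -- representation of the increments
  have hrep4 : ∀ ω : Ω, θhat N₄ ω - θhat N₃ ω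
      = ∑ k ∈ Finset.range N₄, (a N₄ k - a N₃ k) * D k ω := by
    intro ω
    rw [hrep N₄ hN₄ le_rfl ω, hrep N₃ hN₃ h34 ω, add_sub_add_left_eq_sub,
      ← Finset.sum_sub_distrib]
    exact Finset.sum_congr rfl fun k _ => by ring
  have hrep2 : ∀ ω : Ω, θhat N₂ ω - θhat N₁ ω
      = ∑ l ∈ Finset.range N₄, (a N₂ l - a N₁ l) * D l ω := by
    intro ω
    rw [hrep N₂ hN₂ (h23.trans h34) ω, hrep N₁ hN₁ (h12.trans (h23.trans h34)) ω,
      add_sub_add_left_eq_sub, ← Finset.sum_sub_distrib]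
    exact Finset.sum_congr rfl fun k _ => by ring
  -- compute the integral
  have hmain : ∫ ω, (θhat N₄ ω - θhat N₃ ω) * (θhat N₂ ω - θhat N₁ ω) ∂P
      = ∑ k ∈ Finset.range N₄, ∑ l ∈ Finset.range N₄,
          ((a N₄ k - a N₃ k) * (a N₂ l - a N₁ l)) * G k l := by
    have heq : ∀ ω : Ω, (θhat N₄ ω - θhat N₃ ω) * (θhat N₂ ω - θhat N₁ ω)
        = ∑ k ∈ Finset.range N₄, ∑ l ∈ Finset.range N₄,
            ((a N₄ k - a N₃ k) * (a N₂ l - a N₁ l)) * (D k ω * D l ω) := by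
      intro ω
      rw [hrep4 ω, hrep2 ω, Finset.sum_mul_sum]
      exact Finset.sum_congr rfl fun k _ => Finset.sum_congr rfl fun l _ => by ring
    simp only [heq]
    rw [integral_finset_sum _ (fun k _ => integrable_finset_sum _
      (fun l _ => (hInt k l).const_mul _))]
    refine Finset.sum_congr rfl fun k _ => ?_
    rw [integral_finset_sum _ (fun l _ => (hInt k l).const_mul _)]
    exact Finset.sum_congr rfl fun l _ => integral_const_mul _ _
  rw [hmain]
  have expand : ∀ k l : ℕ, ((a N₄ k - a N₃ k) * (a N₂ l - a N₁ l)) * G k l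
      = (a N₄ k * a N₂ l * G k l - a N₄ k * a N₁ l * G k l)
        - (a N₃ k * a N₂ l * G k l - a N₃ k * a N₁ l * G k l) := fun k l => by ring
  simp only [expand, Finset.sum_sub_distrib]
  rw [hkey N₄ N₂ hN₂ (h23.trans h34) le_rfl,
    hkey N₄ N₁ hN₁ (h12.trans (h23.trans h34)) le_rfl,
    hkey N₃ N₂ hN₂ h23 h34, hkey N₃ N₁ hN₁ (h12.trans h23) h34]
  ring
end

section
/- Let (Y_N)_{N≥1} be a sequence of square-integrable real random variables on a probability space such that E[Y_N] = θ for all N, Var(Y_N) → 0 as N → ∞, and the increments (Y_{N+1} - Y_N)_{N≥1} form a mutually independent family of random variables. Then Y_N → θ almost surely as N → ∞. -/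
open MeasureTheory Filter ProbabilityTheory
open scoped ENNReal NNReal

/-- `iIndepFun` is stable under a.e. modification of each function. -/
lemma iIndepFun_congr_aux {Ω : Type*} [MeasurableSpace Ω] {P : Measure Ω}
    {f g : ℕ → Ω → ℝ} (h : iIndepFun f P)
    (hfg : ∀ n, f n =ᵐ[P] g n) : iIndepFun g P := by
  rw [iIndepFun_iff_measure_inter_preimage_eq_mul] at h ⊢
  intro S sets hsets
  have hall : ∀ᵐ ω ∂P, ∀ n, f n ω = g n ω := ae_all_iff.2 hfg
  have hpre : ∀ i : ℕ, f i ⁻¹' sets i =ᵐ[P] g i ⁻¹' sets i := by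
    intro i
    filter_upwards [hfg i] with ω hω
    show (f i ω ∈ sets i) = (g i ω ∈ sets i)
    rw [hω]
  have hInter : (⋂ i ∈ S, f i ⁻¹' sets i) =ᵐ[P] (⋂ i ∈ S, g i ⁻¹' sets i) := by
    rw [Filter.eventuallyEq_set]
    filter_upwards [hall] with ω hω
    simp only [Set.mem_iInter, Set.mem_preimage]
    constructor <;> intro hm i hi
    · rw [← hω i]; exact hm i hi
    · rw [hω i]; exact hm i hi
  rw [measure_congr hInter.symm, h S hsets]
  exact Finset.prod_congr rfl fun i _ => measure_congr (hpre i)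

/-- For a real function in `L²`, the `L²` seminorm is the square root of the
integral of the square. -/
lemma eLpNorm_two_eq_ofReal_sqrt {Ω : Type*} [MeasurableSpace Ω] {P : Measure Ω}
    {f : Ω → ℝ} (hf : MemLp f 2 P) :
    eLpNorm f 2 P = ENNReal.ofReal (Real.sqrt (∫ ω, f ω ^ 2 ∂P)) := by
  rw [hf.eLpNorm_eq_integral_rpow_norm two_ne_zero ENNReal.ofNat_ne_top]
  have h2 : (2 : ℝ≥0∞).toReal = 2 := by simp
  have hint : (∫ ω, ‖f ω‖ ^ (2 : ℝ≥0∞).toReal ∂P) = ∫ ω, f ω ^ 2 ∂P := by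
    refine integral_congr_ae (Filter.Eventually.of_forall fun ω => ?_)
    show ‖f ω‖ ^ (2 : ℝ≥0∞).toReal = f ω ^ 2
    rw [h2, show ((2 : ℝ)) = ((2 : ℕ) : ℝ) by norm_num, Real.rpow_natCast]
    simp [sq_abs]
  rw [hint, Real.sqrt_eq_rpow, h2]
  norm_num

/-- Abstract strong consistency lemma: a sequence of square-integrable random
variables with mean `θ`, vanishing variance and mutually independent increments
converges to `θ` almost surely. -/
theorem unbiased_indep_increments_vanishing_variance_tendsto_ae
    {Ω : Type*} [MeasureSpace Ω] (P : Measure Ω) [IsProbabilityMeasure P]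
    (θ : ℝ) (Y : ℕ → Ω → ℝ)
    (hL2 : ∀ N : ℕ, MemLp (Y N) 2 P)
    (hmean : ∀ N : ℕ, ∫ ω, Y N ω ∂P = θ)
    (hvar : Tendsto (fun N : ℕ => ∫ ω, (Y N ω - θ) ^ 2 ∂P) atTop (nhds 0))
    (hindep : iIndepFun
      (fun (N : ℕ) ω => Y (N + 1) ω - Y N ω) P) :
    ∀ᵐ ω ∂P, Tendsto (fun N : ℕ => Y N ω) atTop (nhds θ) := by
  classical
  -- strongly measurable modifications
  set g : ℕ → Ω → ℝ := fun n => (hL2 n).1.mk (Y n) with hg_def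
  have hgsm : ∀ n, StronglyMeasurable (g n) := fun n => (hL2 n).1.stronglyMeasurable_mk
  have hae : ∀ n, Y n =ᵐ[P] g n := fun n => (hL2 n).1.ae_eq_mk
  have hgL2 : ∀ n, MemLp (g n) 2 P := fun n => (hL2 n).ae_eq (hae n)
  have hgint : ∀ n, Integrable (g n) P := fun n => (hgL2 n).integrable one_le_two
  have hgmean : ∀ n, ∫ ω, g n ω ∂P = θ := fun n => by
    rw [← integral_congr_ae (hae n)]; exact hmean n
  -- increments
  set D : ℕ → Ω → ℝ := fun n ω => g (n + 1) ω - g n ω with hD_def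
  have hDsm : ∀ n, StronglyMeasurable (D n) := fun n => (hgsm (n + 1)).sub (hgsm n)
  have hDindep : iIndepFun D P := by
    refine iIndepFun_congr_aux hindep fun n => ?_
    filter_upwards [hae (n + 1), hae n] with ω h1 h2
    simp only [hD_def, h1, h2]
  have hDint : ∀ n, Integrable (D n) P := fun n => (hgint (n + 1)).sub (hgint n)
  have hDmean : ∀ n, ∫ ω, D n ω ∂P = 0 := fun n => by
    rw [hD_def]
    simp only
    rw [integral_sub (hgint (n + 1)) (hgint n), hgmean, hgmean, sub_self]
  -- the martingale of partial sums
  set ℱ := Filtration.natural D hDsm with hℱ_def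
  set T : ℕ → Ω → ℝ := fun n ω => ∑ k ∈ Finset.range (n + 1), D k ω with hT_def
  have hTtel : ∀ n ω, T n ω = g (n + 1) ω - g 0 ω := by
    intro n ω
    exact Finset.sum_range_sub (fun k => g k ω) (n + 1)
  have hadp : StronglyAdapted ℱ T := by
    intro n
    refine Finset.stronglyMeasurable_fun_sum _ fun k hk => ?_
    have hk' : k ≤ n := Nat.lt_succ_iff.mp (Finset.mem_range.mp hk)
    exact ((Filtration.stronglyAdapted_natural hDsm k).mono (ℱ.mono hk'))
  have hTint : ∀ n, Integrable (T n) P := fun n =>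
    integrable_finset_sum _ fun k _ => hDint k
  have hmart : Martingale T ℱ P := by
    refine martingale_of_condExp_sub_eq_zero_nat hadp hTint fun n => ?_
    have hdiff : T (n + 1) - T n = D (n + 1) := by
      funext ω
      simp only [Pi.sub_apply, hT_def, Finset.sum_range_succ]
      ring
    rw [hdiff]
    have := hDindep.condExp_natural_ae_eq_of_lt hDsm (Nat.lt_succ_self n)
    refine this.trans ?_
    rw [hDmean (n + 1)]
    rfl
  -- L¹ bound
  obtain ⟨C, hC⟩ : ∃ C : ℝ, ∀ n, ∫ ω, (Y n ω - θ) ^ 2 ∂P ≤ C := by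
    obtain ⟨C, hC⟩ := hvar.bddAbove_range
    exact ⟨C, fun n => hC ⟨n, rfl⟩⟩
  have hYmθL2 : ∀ n, MemLp (fun ω => Y n ω - θ) 2 P := fun n =>
    (hL2 n).sub (memLp_const θ)
  have hnorm_bound : ∀ n, eLpNorm (fun ω => Y n ω - θ) 2 P
      ≤ ENNReal.ofReal (Real.sqrt C) := by
    intro n
    rw [eLpNorm_two_eq_ofReal_sqrt (hYmθL2 n)]
    exact ENNReal.ofReal_le_ofReal (Real.sqrt_le_sqrt (hC n))
  set R : ℝ≥0 := 2 * (Real.sqrt C).toNNReal with hR_def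
  have hbdd : ∀ n, eLpNorm (T n) 1 P ≤ (R : ℝ≥0∞) := by
    intro n
    have h1 : eLpNorm (T n) 1 P ≤ eLpNorm (T n) 2 P :=
      eLpNorm_le_eLpNorm_of_exponent_le (by norm_num) (hTint n).1
    have hTeq : T n =ᵐ[P] fun ω => (Y (n + 1) ω - θ) - (Y 0 ω - θ) := by
      filter_upwards [hae (n + 1), hae 0] with ω h1 h0
      rw [hTtel n ω, ← h1, ← h0]; ring
    have h2 : eLpNorm (T n) 2 P
        = eLpNorm (fun ω => (Y (n + 1) ω - θ) - (Y 0 ω - θ)) 2 P :=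
      eLpNorm_congr_ae hTeq
    have h3 : eLpNorm (fun ω => (Y (n + 1) ω - θ) - (Y 0 ω - θ)) 2 P
        ≤ eLpNorm (fun ω => Y (n + 1) ω - θ) 2 P + eLpNorm (fun ω => Y 0 ω - θ) 2 P :=
      eLpNorm_sub_le (hYmθL2 (n + 1)).1 (hYmθL2 0).1 one_le_two
    calc eLpNorm (T n) 1 P ≤ eLpNorm (T n) 2 P := h1
      _ ≤ eLpNorm (fun ω => Y (n + 1) ω - θ) 2 P + eLpNorm (fun ω => Y 0 ω - θ) 2 P :=
          h2 ▸ h3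
      _ ≤ ENNReal.ofReal (Real.sqrt C) + ENNReal.ofReal (Real.sqrt C) :=
          add_le_add (hnorm_bound _) (hnorm_bound _)
      _ = (R : ℝ≥0∞) := by
          rw [hR_def]
          push_cast
          rw [ENNReal.ofReal, two_mul]
  -- a.s. convergence of the martingale
  have hconv : ∀ᵐ ω ∂P, ∃ c, Tendsto (fun n => T n ω) atTop (nhds c) :=
    hmart.submartingale.exists_ae_tendsto_of_bdd hbdd
  -- L² convergence to θ, hence a.e. convergent subsequence
  have heLp_tendsto : Tendsto (fun n => eLpNorm ((fun ω => Y n ω) - fun _ => θ) 2 P)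
      atTop (nhds 0) := by
    have heq : ∀ n, eLpNorm ((fun ω => Y n ω) - fun _ => θ) 2 P
        = ENNReal.ofReal (Real.sqrt (∫ ω, (Y n ω - θ) ^ 2 ∂P)) := by
      intro n
      exact eLpNorm_two_eq_ofReal_sqrt (hYmθL2 n)
    simp only [heq]
    have : Tendsto (fun n => Real.sqrt (∫ ω, (Y n ω - θ) ^ 2 ∂P)) atTop (nhds 0) := by
      have := (Real.continuous_sqrt.tendsto 0).comp hvar
      simpa [Function.comp_def] using this
    have h2 := (ENNReal.continuous_ofReal.tendsto 0).comp this
    simpa [Function.comp_def] using h2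
  have hTIM : TendstoInMeasure P (fun n => Y n) atTop (fun _ => θ) :=
    tendstoInMeasure_of_tendsto_eLpNorm (p := 2) two_ne_zero
      (fun n => (hL2 n).1) aestronglyMeasurable_const heLp_tendsto
  obtain ⟨ns, _hns, hsub⟩ := hTIM.exists_seq_tendsto_ae
  -- combine everything
  have haell : ∀ᵐ ω ∂P, ∀ n, Y n ω = g n ω := ae_all_iff.2 hae
  filter_upwards [hconv, hsub, haell] with ω ⟨c, hc⟩ hsubω haeω
  -- g (n+1) ω tends to c + g 0 ω
  have hg1 : Tendsto (fun n => g (n + 1) ω) atTop (nhds (c + g 0 ω)) := by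
    have : (fun n => g (n + 1) ω) = fun n => T n ω + g 0 ω := by
      funext n; rw [hTtel n ω]; ring
    rw [this]
    exact hc.add_const _
  have hgconv : Tendsto (fun n => g n ω) atTop (nhds (c + g 0 ω)) :=
    (tendsto_add_atTop_iff_nat 1).mp hg1
  have hYconv : Tendsto (fun n => Y n ω) atTop (nhds (c + g 0 ω)) := by
    refine hgconv.congr fun n => (haeω n).symm
  -- the subsequence tends to θ, so the limit is θ
  have hsub2 : Tendsto (fun i => Y (ns i) ω) atTop (nhds (c + g 0 ω)) :=
    hYconv.comp _hns.tendsto_atTop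
  have : c + g 0 ω = θ := tendsto_nhds_unique hsub2 hsubω
  rwa [this] at hYconv
end

section
/- Let h > 0, θ ∈ ℝ, and B : [0,∞) → Ω → ℝ a process with B_0 = 0 a.s. Define γ(k) = E[(B_{(k+1)h} - B_{kh}) B_h] and suppose: (i) for each N and every a ∈ ℝ^N, the random variable Σ_{k=1}^N a_k (B_{kh} - B_{(k-1)h}) has the Gaussian law with mean 0 and variance aᵀ Γ^{(N)} a, where Γ^{(N)} = (γ(|l-m|))_{l,m=1}^N; (ii) each Γ^{(N)} is positive definite; (iii) γ(k) → 0 as k → ∞. Let X_t = θt + B_t, z_N = (h,...,h)ᵀ ∈ ℝ^N, ΔX^{(N)} = (X_{kh} - X_{(k-1)h})_{k=1}^N, and θ̂^{(N)} = (z_Nᵀ (Γ^{(N)})⁻¹ ΔX^{(N)})/(z_Nᵀ (Γ^{(N)})⁻¹ z_N). Then θ̂^{(N)} → θ almost surely as N → ∞. -/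
namespace MLEAux
open Matrix MeasureTheory Filter ProbabilityTheory Real
open scoped NNReal ENNReal


lemma gauss_mgf (v : ℝ≥0) (hv : v ≠ 0) (s : ℝ) :
    Integrable (fun x => rexp (s * x)) (gaussianReal 0 v) ∧
      ∫ x, rexp (s * x) ∂(gaussianReal 0 v) = rexp (s ^ 2 * v / 2) := by
  have hv0 : (0:ℝ) < (v:ℝ) := by
    have := v.coe_nonneg
    rcases this.lt_or_eq with h | h
    · exact h
    · exact absurd (by exact_mod_cast h.symm) hv
  set vr : ℝ := (v:ℝ) with hvr
  have hb : (0:ℝ) < (2*vr)⁻¹ := by positivity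
  have expeq : ∀ x : ℝ, -(x-0)^2/(2*vr) + s*x
      = s^2*vr/2 + (-(2*vr)⁻¹*(x - s*vr)^2) := by
    intro x; field_simp; ring
  have key : ∀ x : ℝ, gaussianPDFReal 0 v x * rexp (s * x)
      = rexp (s^2*vr/2) * ((√(2*π*vr))⁻¹ * rexp (-(2*vr)⁻¹ * (x - s*vr)^2)) := by
    intro x
    rw [gaussianPDFReal, mul_assoc, ← Real.exp_add, expeq x, Real.exp_add]
    ring
  have Ig : Integrable (fun x : ℝ => rexp (-(2*vr)⁻¹ * x^2)) volume :=
    integrable_exp_neg_mul_sq hb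
  have Igt : Integrable (fun x : ℝ => rexp (-(2*vr)⁻¹ * (x - s*vr)^2)) volume :=
    Ig.comp_sub_right (s*vr)
  have h1 : Integrable (fun x => gaussianPDFReal 0 v x * rexp (s*x)) volume := by
    have : (fun x => gaussianPDFReal 0 v x * rexp (s*x))
        = fun x => rexp (s^2*vr/2) * ((√(2*π*vr))⁻¹ * rexp (-(2*vr)⁻¹ * (x - s*vr)^2)) :=
      funext key
    rw [this]
    exact (Igt.const_mul _).const_mul _
  have hmeas : Measurable (fun x => (gaussianPDFReal 0 v x).toNNReal) :=
    (measurable_gaussianPDFReal 0 v).real_toNNReal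
  have hpdf : gaussianPDF 0 v = fun x => ((gaussianPDFReal 0 v x).toNNReal : ℝ≥0∞) := rfl
  have hsmul : (fun x => ((gaussianPDFReal 0 v x).toNNReal) • rexp (s*x))
      = fun x => gaussianPDFReal 0 v x * rexp (s*x) := by
    funext x
    rw [NNReal.smul_def, Real.coe_toNNReal _ (gaussianPDFReal_nonneg 0 v x), smul_eq_mul]
  constructor
  · rw [gaussianReal_of_var_ne_zero 0 hv, hpdf]
    rw [integrable_withDensity_iff_integrable_smul hmeas]
    rw [hsmul]; exact h1
  · rw [gaussianReal_of_var_ne_zero 0 hv, hpdf,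
      integral_withDensity_eq_integral_smul hmeas]
    rw [hsmul]
    have : ∫ x, gaussianPDFReal 0 v x * rexp (s*x)
        = ∫ x, rexp (s^2*vr/2) * ((√(2*π*vr))⁻¹ * rexp (-(2*vr)⁻¹ * (x - s*vr)^2)) := by
      congr 1; exact funext key
    rw [this, integral_const_mul, integral_const_mul,
      integral_sub_right_eq_self (fun x => rexp (-(2*vr)⁻¹ * x^2)) (s*vr),
      integral_gaussian]
    have h2 : π / (2*vr)⁻¹ = 2*π*vr := by field_simp
    rw [h2]
    have h3 : (√(2*π*vr))⁻¹ * √(2*π*vr) = 1 := by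
      rw [inv_mul_cancel₀]
      exact Real.sqrt_ne_zero'.mpr (by positivity)
    rw [h3, mul_one]

lemma pointwise_four (y : ℝ) : y^4 ≤ 256 * (rexp y + rexp (-y)) := by
  have h1 : rexp |y| = (rexp (|y|/4))^4 := by
    rw [← Real.exp_nat_mul]
    ring_nf
  have h2 : |y|/4 + 1 ≤ rexp (|y|/4) := by
    have := Real.add_one_le_exp (|y|/4); linarith
  have h3 : (|y|/4)^4 ≤ (rexp (|y|/4))^4 := by
    apply pow_le_pow_left₀ (by positivity)
    have : (0:ℝ) ≤ |y| := abs_nonneg y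
    linarith
  have h4 : y^4 = |y|^4 := by
    rw [← abs_pow]
    exact (abs_of_nonneg (by positivity)).symm
  have h5 : rexp |y| ≤ rexp y + rexp (-y) := by
    rcases abs_cases y with ⟨h, _⟩ | ⟨h, _⟩
    · rw [h]; have := (Real.exp_pos (-y)).le; linarith
    · rw [h]; have := (Real.exp_pos y).le; linarith
  have h6 : (|y|/4)^4 = |y|^4/256 := by ring
  calc y^4 = |y|^4 := h4
    _ = 256 * (|y|^4/256) := by ring
    _ ≤ 256 * rexp |y| := by rw [← h6]; nlinarith [h3, h1.symm]
    _ ≤ 256 * (rexp y + rexp (-y)) := by nlinarith [h5]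

lemma gauss_four (v : ℝ≥0) (hv : v ≠ 0) :
    Integrable (fun x : ℝ => x^4) (gaussianReal 0 v) ∧
      ∫ x, x^4 ∂(gaussianReal 0 v) ≤ 1024 * (v:ℝ)^2 := by
  have hv0 : (0:ℝ) < (v:ℝ) := by
    have := v.coe_nonneg
    rcases this.lt_or_eq with h | h
    · exact h
    · exact absurd (by exact_mod_cast h.symm) hv
  set vr : ℝ := (v:ℝ) with hvr
  set s : ℝ := (√vr)⁻¹ with hs
  have hsq : s^2 * vr = 1 := by
    rw [hs, ← Real.sqrt_inv]
    rw [Real.sq_sqrt (by positivity)]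
    field_simp
  obtain ⟨i1, e1⟩ := gauss_mgf v hv s
  obtain ⟨i2, e2⟩ := gauss_mgf v hv (-s)
  have hneg : (fun x => rexp ((-s) * x)) = fun x => rexp (-(s*x)) := by
    funext x; ring_nf
  have bound : ∀ x : ℝ, x^4 ≤ 256 * vr^2 * (rexp (s*x) + rexp ((-s)*x)) := by
    intro x
    have h := pointwise_four (s*x)
    have hx4 : (s*x)^4 = x^4 / vr^2 := by
      rw [mul_pow, hs]
      have : ((√vr)⁻¹)^4 = (vr^2)⁻¹ := by
        rw [← Real.sqrt_inv]
        have h2 : (√vr⁻¹)^4 = ((√vr⁻¹)^2)^2 := by ring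
        rw [h2, Real.sq_sqrt (by positivity)]
        ring
      rw [this]; field_simp
    have hnx : rexp (-(s*x)) = rexp ((-s)*x) := by ring_nf
    rw [hx4, hnx] at h
    have hvr2 : (0:ℝ) < vr^2 := by positivity
    calc x^4 = vr^2 * (x^4/vr^2) := by field_simp
      _ ≤ vr^2 * (256 * (rexp (s*x) + rexp ((-s)*x))) := by
          apply mul_le_mul_of_nonneg_left h hvr2.le
      _ = 256 * vr^2 * (rexp (s*x) + rexp ((-s)*x)) := by ring
  have ig : Integrable (fun x => 256 * vr^2 * (rexp (s*x) + rexp ((-s)*x)))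
      (gaussianReal 0 v) := ((i1.add i2).const_mul _)
  have i4 : Integrable (fun x : ℝ => x^4) (gaussianReal 0 v) := by
    apply ig.mono
    · exact (continuous_pow 4).aestronglyMeasurable
    · apply ae_of_all
      intro x
      rw [Real.norm_eq_abs, Real.norm_eq_abs]
      rw [abs_of_nonneg (by positivity : (0:ℝ) ≤ x^4)]
      have h2 : (0:ℝ) ≤ 256 * vr^2 * (rexp (s*x) + rexp ((-s)*x)) := by positivity
      rw [abs_of_nonneg h2]
      exact bound x
  refine ⟨i4, ?_⟩
  have : ∫ x, x^4 ∂(gaussianReal 0 v)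
      ≤ ∫ x, 256 * vr^2 * (rexp (s*x) + rexp ((-s)*x)) ∂(gaussianReal 0 v) :=
    integral_mono i4 ig bound
  rw [integral_const_mul, integral_add i1 i2, e1, e2] at this
  have hexp : (-s)^2 * vr / 2 = s^2*vr/2 := by ring
  rw [hexp, hsq] at this
  have hhalf : rexp (1/2) ≤ 2 := by
    nlinarith [Real.exp_one_lt_d9, Real.exp_pos (1/2),
      (by rw [← Real.exp_nat_mul]; norm_num : (rexp (1/2))^(2:ℕ) = rexp 1)]
  have : ∫ x, x^4 ∂(gaussianReal 0 v) ≤ 256 * vr^2 * (2 + 2) := by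
    have h2 : (0:ℝ) ≤ 256 * vr^2 := by positivity
    nlinarith [this]
  linarith [this]




lemma aemeasurable_of_gauss {Ω : Type*} [MeasurableSpace Ω] {P : Measure Ω}
    [IsProbabilityMeasure P] {W : Ω → ℝ} {m : ℝ} {v : ℝ≥0}
    (hW : Measure.map W P = gaussianReal m v) : AEMeasurable W P := by
  by_contra hc
  have h0 := Measure.map_of_not_aemeasurable hc
  rw [hW] at h0
  have : (gaussianReal m v) Set.univ = 0 := by rw [h0]; rfl
  rw [measure_univ] at this
  exact one_ne_zero this

lemma gauss_tail {Ω : Type*} [MeasurableSpace Ω] (P : Measure Ω) [IsProbabilityMeasure P]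
    {W : Ω → ℝ} {v : ℝ} (hv : 0 ≤ v) (hW : Measure.map W P = gaussianReal 0 v.toNNReal)
    {t δ : ℝ} (ht : 0 < t) (hvδ : v ≤ δ) :
    P {ω | t < |W ω|} ≤ ENNReal.ofReal (1024 * δ^2 / t^4) := by
  have hWm : AEMeasurable W P := aemeasurable_of_gauss hW
  have hset : MeasurableSet {x : ℝ | t < |x|} :=
    measurableSet_lt measurable_const continuous_abs.measurable
  have hPeq : P {ω | t < |W ω|} = (gaussianReal 0 v.toNNReal) {x | t < |x|} := by
    rw [← hW, Measure.map_apply_of_aemeasurable hWm hset]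
    rfl
  rw [hPeq]
  rcases hv.lt_or_eq with hvpos | h0
  · have hvne : v.toNNReal ≠ 0 := by
      simp only [ne_eq, Real.toNNReal_eq_zero, not_le]
      exact hvpos
    obtain ⟨i4, e4⟩ := gauss_four v.toNNReal hvne
    set ν := gaussianReal 0 v.toNNReal with hν
    have coev : ((v.toNNReal : ℝ≥0) : ℝ) = v := Real.coe_toNNReal v hv
    have claim : ENNReal.ofReal (t^4) * ν {x | t < |x|} ≤ ENNReal.ofReal (1024*v^2) := by
      calc ENNReal.ofReal (t^4) * ν {x | t < |x|}
          = ∫⁻ _ in {x | t < |x|}, ENNReal.ofReal (t^4) ∂ν := (setLIntegral_const _ _).symm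
        _ ≤ ∫⁻ x in {x | t < |x|}, ENNReal.ofReal (x^4) ∂ν := by
            apply setLIntegral_mono (by measurability)
            intro x hx
            apply ENNReal.ofReal_le_ofReal
            have h1 : t^4 ≤ |x|^4 := pow_le_pow_left₀ ht.le (le_of_lt hx) 4
            rwa [← abs_pow, abs_of_nonneg (by positivity : (0:ℝ) ≤ x^4)] at h1
        _ ≤ ∫⁻ x, ENNReal.ofReal (x^4) ∂ν := setLIntegral_le_lintegral _ _
        _ = ENNReal.ofReal (∫ x, x^4 ∂ν) :=
            (ofReal_integral_eq_lintegral_ofReal i4 (ae_of_all _ (fun x => by positivity))).symm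
        _ ≤ ENNReal.ofReal (1024*v^2) := by
            apply ENNReal.ofReal_le_ofReal
            calc ∫ x, x^4 ∂ν ≤ 1024 * ((v.toNNReal : ℝ))^2 := e4
              _ = 1024 * v^2 := by rw [coev]
    have ht4 : ENNReal.ofReal (t^4) ≠ 0 := by
      simp only [ne_eq, ENNReal.ofReal_eq_zero, not_le]
      positivity
    have ht4' : ENNReal.ofReal (t^4) ≠ ⊤ := ENNReal.ofReal_ne_top
    have hdiv : ν {x | t < |x|} ≤ ENNReal.ofReal (1024*v^2) / ENNReal.ofReal (t^4) := by
      rw [ENNReal.le_div_iff_mul_le (Or.inl ht4) (Or.inl ht4')]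
      rw [mul_comm]
      exact claim
    calc ν {x | t < |x|} ≤ ENNReal.ofReal (1024*v^2) / ENNReal.ofReal (t^4) := hdiv
      _ = ENNReal.ofReal (1024*v^2/t^4) := (ENNReal.ofReal_div_of_pos (by positivity)).symm
      _ ≤ ENNReal.ofReal (1024*δ^2/t^4) := by
          apply ENNReal.ofReal_le_ofReal
          gcongr
  · rw [← h0]
    simp only [Real.toNNReal_zero, gaussianReal_zero_var]
    rw [Measure.dirac_apply' _ hset]
    simp only [Set.indicator_apply, Set.mem_setOf_eq, abs_zero]
    rw [if_neg (by linarith [ht])]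
    exact zero_le




/-- The chaining bound function. -/
noncomputable def Hb (ε δ : ℝ) : ℝ := 10^8 * δ^2 / ε^4

lemma Hb_nonneg {ε δ : ℝ} (hε : 0 < ε) : 0 ≤ Hb ε δ := by
  unfold Hb; positivity

lemma Hb_mono {ε d δ : ℝ} (hε : 0 < ε) (hd : 0 ≤ d) (h : d ≤ δ) : Hb ε d ≤ Hb ε δ := by
  unfold Hb
  gcongr

lemma Hb_step {ε d : ℝ} (hε : 0 < ε) (hd : 0 < d) :
    Hb (9/10*ε) (d/2) + 1024*d^2/((1/10*ε)^4) + Hb ε (d/2) ≤ Hb ε d := by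
  unfold Hb
  have hu : (0:ℝ) ≤ d^2/ε^4 := by positivity
  have h1 : 10^8*(d/2)^2/((9/10*ε)^4) = (10^12/26244) * (d^2/ε^4) := by
    field_simp; ring
  have h2 : 1024*d^2/((1/10*ε)^4) = 10240000*(d^2/ε^4) := by
    field_simp; ring
  have h3 : (10:ℝ)^8*(d/2)^2/ε^4 = (10^8/4)*(d^2/ε^4) := by
    field_simp; ring
  rw [h1, h2, h3]
  calc (10^12/26244) * (d^2/ε^4) + 10240000*(d^2/ε^4) + (10^8/4)*(d^2/ε^4)
      = (10^12/26244 + 10240000 + 10^8/4) * (d^2/ε^4) := by ring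
    _ ≤ 10^8 * (d^2/ε^4) := by
        apply mul_le_mul_of_nonneg_right (by norm_num) hu
    _ = 10^8*d^2/ε^4 := by ring

section Chain

variable {Ω : Type*} [MeasurableSpace Ω] (P : Measure Ω) [IsProbabilityMeasure P]
variable (Y : ℕ → Ω → ℝ) (r : ℕ → ℝ)

/-- In a block where the variance proxy `r` is constant, all the `Y`'s coincide a.s. -/
lemma chain_zero
    (hrm : ∀ ⦃m n⦄, m ≤ n → r n ≤ r m)
    (hYd : ∀ m n, m ≤ n → Measure.map (fun ω => Y m ω - Y n ω) P
      = gaussianReal 0 (Real.toNNReal (r m - r n)))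
    {m M : ℕ} (hmM : m ≤ M) (h0 : r m - r M ≤ 0) {ε : ℝ} (hε : 0 < ε) :
    P (⋃ k ∈ Finset.Icc m M, {ω | ε < |Y k ω - Y M ω|}) = 0 := by
  have : ∀ k ∈ Finset.Icc m M, P {ω | ε < |Y k ω - Y M ω|} = 0 := by
    intro k hk
    rw [Finset.mem_Icc] at hk
    have h1 : r k - r M = 0 := by
      have := hrm hk.1
      have := hrm hk.2
      linarith
    have hmap := hYd k M hk.2
    rw [h1] at hmap
    have hWm : AEMeasurable (fun ω => Y k ω - Y M ω) P := aemeasurable_of_gauss hmap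
    have hset : MeasurableSet {x : ℝ | ε < |x|} :=
      measurableSet_lt measurable_const continuous_abs.measurable
    have : P {ω | ε < |Y k ω - Y M ω|}
        = (gaussianReal 0 (Real.toNNReal 0)) {x | ε < |x|} := by
      rw [← hmap, Measure.map_apply_of_aemeasurable hWm hset]
      rfl
    rw [this]
    simp only [Real.toNNReal_zero, gaussianReal_zero_var]
    rw [Measure.dirac_apply' _ hset]
    simp only [Set.indicator_apply, Set.mem_setOf_eq, abs_zero]
    rw [if_neg (by linarith)]
  have hle := measure_biUnion_finset_le (μ := P) (Finset.Icc m M)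
    (fun k => {ω | ε < |Y k ω - Y M ω|})
  rw [Finset.sum_congr rfl this, Finset.sum_const_zero] at hle
  exact le_antisymm hle (zero_le)

lemma chain_main
    (hrm : ∀ ⦃m n⦄, m ≤ n → r n ≤ r m)
    (hYd : ∀ m n, m ≤ n → Measure.map (fun ω => Y m ω - Y n ω) P
      = gaussianReal 0 (Real.toNNReal (r m - r n))) :
    ∀ K m M, m ≤ M → M - m ≤ K → ∀ ε δ : ℝ, 0 < ε → 0 < δ → r m - r M ≤ δ →
    P (⋃ k ∈ Finset.Icc m M, {ω | ε < |Y k ω - Y M ω|}) ≤ ENNReal.ofReal (Hb ε δ) := by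
  intro K
  induction K with
  | zero =>
    intro m M hmM hK ε δ hε hδ _
    have hMm : M = m := by omega
    subst hMm
    rw [chain_zero P Y r hrm hYd le_rfl (by linarith) hε]
    exact zero_le
  | succ K ih =>
    intro m M hmM hK ε δ hε hδ hrδ
    rcases le_or_gt (r m - r M) 0 with h0 | hd
    · rw [chain_zero P Y r hrm hYd hmM h0 hε]
      exact zero_le
    · set d : ℝ := r m - r M with hdd
      -- pivot
      have hmF : m ∈ (Finset.Icc m M).filter (fun n => r m - r n ≤ d/2) := by
        rw [Finset.mem_filter, Finset.mem_Icc]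
        refine ⟨⟨le_rfl, hmM⟩, by linarith⟩
      set F := (Finset.Icc m M).filter (fun n => r m - r n ≤ d/2) with hF
      have hFne : F.Nonempty := ⟨m, hmF⟩
      set p := F.max' hFne with hp
      have hpF : p ∈ F := F.max'_mem hFne
      rw [hF, Finset.mem_filter, Finset.mem_Icc] at hpF
      obtain ⟨⟨hmp, hpM'⟩, hrp⟩ := hpF
      have hpM : p < M := by
        rcases hpM'.lt_or_eq with h | h
        · exact h
        · exfalso
          rw [h] at hrp
          linarith
      have hp1 : d/2 < r m - r (p+1) := by
        by_contra hc
        push_neg at hc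
        have : p + 1 ∈ F := by
          rw [hF, Finset.mem_filter, Finset.mem_Icc]
          exact ⟨⟨by omega, by omega⟩, hc⟩
        have := F.le_max' _ this
        omega
      -- event inclusion
      have hsub : (⋃ k ∈ Finset.Icc m M, {ω | ε < |Y k ω - Y M ω|}) ⊆
          (⋃ k ∈ Finset.Icc m p, {ω | (9/10*ε) < |Y k ω - Y p ω|}) ∪
          ({ω | (1/10*ε) < |Y p ω - Y M ω|} ∪
          (⋃ k ∈ Finset.Icc (p+1) M, {ω | ε < |Y k ω - Y M ω|})) := by
        intro ω hω
        simp only [Set.mem_iUnion, Set.mem_union, Set.mem_setOf_eq, Finset.mem_Icc,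
          exists_prop] at hω ⊢
        obtain ⟨k, ⟨hk1, hk2⟩, hk3⟩ := hω
        by_cases hkp : k ≤ p
        · by_cases hL : 1/10*ε < |Y p ω - Y M ω|
          · exact Or.inr (Or.inl hL)
          · push_neg at hL
            refine Or.inl ⟨k, ⟨hk1, hkp⟩, ?_⟩
            have habs : |Y k ω - Y M ω| ≤ |Y k ω - Y p ω| + |Y p ω - Y M ω| :=
              abs_sub_le _ _ _
            linarith
        · exact Or.inr (Or.inr ⟨k, ⟨by omega, hk2⟩, hk3⟩)
      have hP1 : P (⋃ k ∈ Finset.Icc m p, {ω | (9/10*ε) < |Y k ω - Y p ω|})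
          ≤ ENNReal.ofReal (Hb (9/10*ε) (d/2)) := by
        apply ih m p hmp (by omega) (9/10*ε) (d/2) (by linarith) (by linarith) hrp
      have hP2 : P (⋃ k ∈ Finset.Icc (p+1) M, {ω | ε < |Y k ω - Y M ω|})
          ≤ ENNReal.ofReal (Hb ε (d/2)) := by
        apply ih (p+1) M (by omega) (by omega) ε (d/2) hε (by linarith)
        have h1 : r (p+1) ≤ r m := hrm (by omega)
        linarith
      have hPL : P {ω | (1/10*ε) < |Y p ω - Y M ω|}
          ≤ ENNReal.ofReal (1024*d^2/((1/10*ε)^4)) := by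
        have hv0 : 0 ≤ r p - r M := by
          have := hrm hpM'
          linarith
        apply gauss_tail P hv0 (hYd p M hpM') (by linarith)
        have : r p ≤ r m := hrm hmp
        linarith
      calc P (⋃ k ∈ Finset.Icc m M, {ω | ε < |Y k ω - Y M ω|})
          ≤ P ((⋃ k ∈ Finset.Icc m p, {ω | (9/10*ε) < |Y k ω - Y p ω|}) ∪
            ({ω | (1/10*ε) < |Y p ω - Y M ω|} ∪
            (⋃ k ∈ Finset.Icc (p+1) M, {ω | ε < |Y k ω - Y M ω|}))) := measure_mono hsub
        _ ≤ P (⋃ k ∈ Finset.Icc m p, {ω | (9/10*ε) < |Y k ω - Y p ω|}) +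
            (P {ω | (1/10*ε) < |Y p ω - Y M ω|} +
             P (⋃ k ∈ Finset.Icc (p+1) M, {ω | ε < |Y k ω - Y M ω|})) :=
          le_trans (measure_union_le _ _) (by gcongr; exact measure_union_le _ _)
        _ ≤ ENNReal.ofReal (Hb (9/10*ε) (d/2)) +
            (ENNReal.ofReal (1024*d^2/((1/10*ε)^4)) + ENNReal.ofReal (Hb ε (d/2))) := by
          gcongr
        _ = ENNReal.ofReal (Hb (9/10*ε) (d/2) + (1024*d^2/((1/10*ε)^4) + Hb ε (d/2))) := by
          rw [← ENNReal.ofReal_add (by positivity) (Hb_nonneg hε),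
            ← ENNReal.ofReal_add (Hb_nonneg (by linarith))
              (add_nonneg (by positivity) (Hb_nonneg hε))]
        _ ≤ ENNReal.ofReal (Hb ε δ) := by
          apply ENNReal.ofReal_le_ofReal
          have hstep := Hb_step hε hd
          have hmono := Hb_mono hε (by linarith : (0:ℝ) ≤ d) hrδ
          linarith

end Chain


lemma abstract_main {Ω : Type*} [MeasurableSpace Ω] (P : Measure Ω) [IsProbabilityMeasure P]
    (Y : ℕ → Ω → ℝ) (r : ℕ → ℝ)
    (hrpos : ∀ n, 0 < r n)
    (hrm : ∀ ⦃m n⦄, m ≤ n → r n ≤ r m)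
    (hrt : Tendsto r atTop (nhds 0))
    (hY : ∀ n, Measure.map (Y n) P = gaussianReal 0 (Real.toNNReal (r n)))
    (hYd : ∀ m n, m ≤ n → Measure.map (fun ω => Y m ω - Y n ω) P
      = gaussianReal 0 (Real.toNNReal (r m - r n))) :
    ∀ᵐ ω ∂P, Tendsto (fun n => Y n ω) atTop (nhds 0) := by
  classical
  -- the "oscillation beyond m exceeds η" event
  set E : ℕ → ℝ → Set Ω :=
    fun m η => ⋃ n, ⋃ j ∈ Finset.Icc m n, {ω | η < |Y j ω - Y m ω|} with hE
  -- bound on oscillation events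
  have hEbound : ∀ m : ℕ, ∀ η : ℝ, 0 < η →
      P (E m η) ≤ ENNReal.ofReal (Hb (η/2) (r m)) := by
    intro m η hη
    have hmono : Monotone (fun n => ⋃ j ∈ Finset.Icc m n, {ω | η < |Y j ω - Y m ω|}) := by
      intro a b hab ω hω
      simp only [Set.mem_iUnion, Set.mem_setOf_eq, exists_prop, Finset.mem_Icc] at hω ⊢
      obtain ⟨j, hj, hgt⟩ := hω
      exact ⟨j, ⟨hj.1, le_trans hj.2 hab⟩, hgt⟩
    rw [hE]
    rw [hmono.measure_iUnion]
    apply iSup_le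
    intro n
    rcases le_or_gt m n with hmn | hnm
    · -- T n ⊆ anchored-at-n event
      have hsub : (⋃ j ∈ Finset.Icc m n, {ω | η < |Y j ω - Y m ω|}) ⊆
          (⋃ j ∈ Finset.Icc m n, {ω | η/2 < |Y j ω - Y n ω|}) := by
        intro ω hω
        simp only [Set.mem_iUnion, Set.mem_setOf_eq, exists_prop] at hω ⊢
        obtain ⟨j, hj, hjgt⟩ := hω
        by_contra hc
        push_neg at hc
        have h1 := hc j hj
        have h2 := hc m (by rw [Finset.mem_Icc]; exact ⟨le_rfl, hmn⟩)
        have habs : |Y j ω - Y m ω| ≤ |Y j ω - Y n ω| + |Y n ω - Y m ω| := abs_sub_le _ _ _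
        rw [abs_sub_comm (Y n ω)] at habs
        linarith
      calc P (⋃ j ∈ Finset.Icc m n, {ω | η < |Y j ω - Y m ω|})
          ≤ P (⋃ j ∈ Finset.Icc m n, {ω | η/2 < |Y j ω - Y n ω|}) := measure_mono hsub
        _ ≤ ENNReal.ofReal (Hb (η/2) (r m)) := by
            apply chain_main P Y r hrm hYd (n - m) m n hmn le_rfl (η/2) (r m)
              (by linarith) (hrpos m)
            linarith [(hrpos n).le, hrm hmn]
    · have : Finset.Icc m n = ∅ := by
        rw [Finset.Icc_eq_empty_iff]
        omega
      rw [this]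
      simp
  -- the bad events
  set Bad : ℕ → Set Ω := fun k =>
    ⋂ m, ({ω | 1/((k:ℝ)+1) < |Y m ω|} ∪ E m (1/((k:ℝ)+1))) with hBad
  have hεk : ∀ k : ℕ, (0:ℝ) < 1/((k:ℝ)+1) := by
    intro k; positivity
  have hBadNull : ∀ k, P (Bad k) = 0 := by
    intro k
    set εk : ℝ := 1/((k:ℝ)+1) with hεkdef
    have hεk0 : 0 < εk := hεk k
    have hbound : ∀ m : ℕ, P (Bad k) ≤
        ENNReal.ofReal (1024 * (r m)^2/εk^4 + Hb (εk/2) (r m)) := by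
      intro m
      have h1 : P (Bad k) ≤ P ({ω | εk < |Y m ω|} ∪ E m εk) := by
        apply measure_mono
        rw [hBad]
        exact Set.iInter_subset _ m
      have h2 : P ({ω | εk < |Y m ω|} ∪ E m εk)
          ≤ P {ω | εk < |Y m ω|} + P (E m εk) := measure_union_le _ _
      have h3 : P {ω | εk < |Y m ω|} ≤ ENNReal.ofReal (1024 * (r m)^2/εk^4) :=
        gauss_tail P (hrpos m).le (hY m) hεk0 le_rfl
      have h4 := hEbound m εk hεk0
      calc P (Bad k) ≤ P {ω | εk < |Y m ω|} + P (E m εk) := le_trans h1 h2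
        _ ≤ ENNReal.ofReal (1024 * (r m)^2/εk^4) + ENNReal.ofReal (Hb (εk/2) (r m)) := by
            gcongr
        _ = ENNReal.ofReal (1024 * (r m)^2/εk^4 + Hb (εk/2) (r m)) := by
            rw [← ENNReal.ofReal_add (by positivity) (by unfold Hb; positivity)]
    have htend : Tendsto (fun m => ENNReal.ofReal (1024 * (r m)^2/εk^4 + Hb (εk/2) (r m)))
        atTop (nhds 0) := by
      rw [show (0:ℝ≥0∞) = ENNReal.ofReal 0 by simp]
      apply ENNReal.tendsto_ofReal
      have hr2 : Tendsto (fun m => (r m)^2) atTop (nhds 0) := by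
        have := hrt.mul hrt
        rw [mul_zero] at this
        simpa [pow_two] using this
      have ht1 : Tendsto (fun m => 1024 * (r m)^2/εk^4) atTop (nhds 0) := by
        have := (hr2.const_mul (1024/εk^4))
        rw [mul_zero] at this
        convert this using 2 with m
        ring
      have ht2 : Tendsto (fun m => Hb (εk/2) (r m)) atTop (nhds 0) := by
        unfold Hb
        have := (hr2.const_mul (10^8/(εk/2)^4))
        rw [mul_zero] at this
        convert this using 2 with m
        ring
      have := ht1.add ht2
      rwa [add_zero] at this
    have : P (Bad k) ≤ 0 := ge_of_tendsto' htend hbound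
    exact le_antisymm this (zero_le)
  have hUnionNull : P (⋃ k, Bad k) = 0 := measure_iUnion_null hBadNull
  rw [ae_iff]
  apply measure_mono_null _ hUnionNull
  intro ω hω
  simp only [Set.mem_setOf_eq] at hω
  -- ω is a point where convergence fails; show it is in some Bad k
  rw [Set.mem_iUnion]
  by_contra hc
  push_neg at hc
  apply hω
  rw [Metric.tendsto_atTop]
  intro ε hε
  obtain ⟨k, hk⟩ := exists_nat_one_div_lt (by linarith : (0:ℝ) < ε/2)
  have hωk := hc k
  rw [hBad, Set.mem_iInter] at hωk
  push_neg at hωk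
  obtain ⟨m, hm⟩ := hωk
  rw [Set.mem_union] at hm
  push_neg at hm
  obtain ⟨hm1, hm2⟩ := hm
  rw [Set.mem_setOf_eq] at hm1
  push_neg at hm1
  refine ⟨m, fun n hn => ?_⟩
  have hm2' : ∀ j, m ≤ j → |Y j ω - Y m ω| ≤ 1/((k:ℝ)+1) := by
    intro j hj
    by_contra hcc
    push_neg at hcc
    apply hm2
    rw [hE]
    simp only [Set.mem_iUnion, Set.mem_setOf_eq, exists_prop]
    exact ⟨j, j, by rw [Finset.mem_Icc]; exact ⟨hj, le_rfl⟩, hcc⟩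
  have h5 := hm2' n hn
  rw [Real.dist_eq, sub_zero]
  have habs : |Y n ω| ≤ |Y n ω - Y m ω| + |Y m ω| := by
    have := abs_sub_le (Y n ω) (Y m ω) 0
    simpa using this
  have : ((k:ℝ)+1) = (k:ℝ)+1 := rfl
  calc |Y n ω| ≤ |Y n ω - Y m ω| + |Y m ω| := habs
    _ ≤ 1/((k:ℝ)+1) + 1/((k:ℝ)+1) := by
        apply add_le_add h5 hm1
    _ < ε/2 + ε/2 := by
        apply add_lt_add hk hk
    _ = ε := by ring



/-- Zero-padding of a coefficient vector. -/
def pad (m n : ℕ) (c : Fin m → ℝ) : Fin n → ℝ :=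
  fun k => if hk : (k:ℕ) < m then c ⟨(k:ℕ), hk⟩ else 0

lemma pad_sum {m n : ℕ} (hmn : m ≤ n) (c : Fin m → ℝ) (f : ℕ → ℝ) :
    ∑ k : Fin n, pad m n c k * f (k:ℕ) = ∑ k : Fin m, c k * f (k:ℕ) := by
  have h1 : ∑ k : Fin m, c k * f (k:ℕ)
      = ∑ k : Fin m, (if hk : (k:ℕ) < m then c ⟨(k:ℕ), hk⟩ else 0) * f (k:ℕ) := by
    apply Finset.sum_congr rfl
    intro k _
    rw [dif_pos k.isLt]
  rw [h1]
  unfold pad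
  rw [Fin.sum_univ_eq_sum_range (fun i => (if hk : i < m then c ⟨i, hk⟩ else 0) * f i) n,
    Fin.sum_univ_eq_sum_range (fun i => (if hk : i < m then c ⟨i, hk⟩ else 0) * f i) m]
  symm
  apply Finset.sum_subset (Finset.range_subset_range.2 hmn)
  intro x _ hx
  rw [Finset.mem_range] at hx
  rw [dif_neg hx, zero_mul]

lemma pad_quad (γ : ℕ → ℝ) (Γ : (N : ℕ) → Matrix (Fin N) (Fin N) ℝ)
    (hΓdef : ∀ (N : ℕ) (l m : Fin N), Γ N l m = γ (Nat.dist l m))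
    {m n : ℕ} (hmn : m ≤ n) (c d : Fin m → ℝ) :
    pad m n c ⬝ᵥ (Γ n *ᵥ pad m n d) = c ⬝ᵥ (Γ m *ᵥ d) := by
  set g : ℕ → ℝ := fun i => ∑ l : Fin m, d l * γ (Nat.dist i (l:ℕ)) with hg
  have claim1 : ∀ k : Fin n, (Γ n *ᵥ pad m n d) k = g (k:ℕ) := by
    intro k
    show (fun j => Γ n k j) ⬝ᵥ pad m n d = g (k:ℕ)
    unfold dotProduct
    have : ∀ l : Fin n, Γ n k l * pad m n d l = pad m n d l * γ (Nat.dist (k:ℕ) (l:ℕ)) := by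
      intro l
      rw [hΓdef, mul_comm]
    rw [Finset.sum_congr rfl (fun l _ => this l)]
    rw [pad_sum hmn d (fun i => γ (Nat.dist (k:ℕ) i))]
  have claim2 : ∀ k : Fin m, (Γ m *ᵥ d) k = g (k:ℕ) := by
    intro k
    show (fun j => Γ m k j) ⬝ᵥ d = g (k:ℕ)
    unfold dotProduct
    apply Finset.sum_congr rfl
    intro l _
    show Γ m k l * d l = d l * γ (Nat.dist (k:ℕ) (l:ℕ))
    rw [hΓdef, mul_comm]
  unfold dotProduct
  have e1 : ∀ k : Fin n, pad m n c k * (Γ n *ᵥ pad m n d) k = pad m n c k * g (k:ℕ) :=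
    fun k => by rw [claim1]
  rw [Finset.sum_congr rfl (fun k _ => e1 k), pad_sum hmn c g]
  apply Finset.sum_congr rfl
  intro k _
  rw [claim2]

lemma dist_sum_bound (γ : ℕ → ℝ) (N k : ℕ) (hk : k < N) :
    ∑ l ∈ Finset.range N, |γ (Nat.dist k l)| ≤ 2 * ∑ j ∈ Finset.range N, |γ j| := by
  have hsplit : Finset.range N = Finset.Ico 0 (k+1) ∪ Finset.Ico (k+1) N := by
    rw [Finset.range_eq_Ico, Finset.Ico_union_Ico_eq_Ico (by omega) (by omega)]
  have hdecomp : ∑ l ∈ Finset.range N, |γ (Nat.dist k l)|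
      = ∑ l ∈ Finset.Ico 0 (k+1), |γ (Nat.dist k l)|
        + ∑ l ∈ Finset.Ico (k+1) N, |γ (Nat.dist k l)| := by
    rw [hsplit, Finset.sum_union (Finset.Ico_disjoint_Ico_consecutive 0 (k+1) N)]
  have piece1 : ∑ l ∈ Finset.Ico 0 (k+1), |γ (Nat.dist k l)|
      ≤ ∑ j ∈ Finset.range N, |γ j| := by
    rw [← Finset.range_eq_Ico]
    have e1 : ∀ l ∈ Finset.range (k+1), |γ (Nat.dist k l)| = |γ (k + 1 - 1 - l)| := by
      intro l hl
      rw [Finset.mem_range] at hl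
      congr 2
      rw [Nat.dist_comm, Nat.dist_eq_sub_of_le (by omega)]
      omega
    rw [Finset.sum_congr rfl e1, Finset.sum_range_reflect (fun j => |γ j|) (k+1)]
    apply Finset.sum_le_sum_of_subset_of_nonneg (Finset.range_subset_range.2 (by omega))
    intro j _ _
    positivity
  have piece2 : ∑ l ∈ Finset.Ico (k+1) N, |γ (Nat.dist k l)|
      ≤ ∑ j ∈ Finset.range N, |γ j| := by
    have e1 : ∀ l ∈ Finset.Ico (k+1) N, |γ (Nat.dist k l)| = |γ (l - k)| := by
      intro l hl
      rw [Finset.mem_Ico] at hl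
      congr 2
      rw [Nat.dist_eq_sub_of_le (by omega)]
    rw [Finset.sum_congr rfl e1, Finset.sum_Ico_eq_sum_range]
    have e2 : ∀ j ∈ Finset.range (N - (k+1)), |γ (k + 1 + j - k)| = |γ (j+1)| := by
      intro j _
      congr 2
      omega
    rw [Finset.sum_congr rfl e2]
    have h3 : ∑ j ∈ Finset.range (N - (k+1)), |γ (j+1)|
        ≤ ∑ j ∈ Finset.range (N - 1), |γ (j+1)| := by
      apply Finset.sum_le_sum_of_subset_of_nonneg (Finset.range_subset_range.2 (by omega))
      intro j _ _
      positivity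
    have h4 : ∑ j ∈ Finset.range (N - 1), |γ (j+1)| = ∑ i ∈ Finset.Ico 1 N, |γ i| := by
      rw [Finset.sum_Ico_eq_sum_range]
      apply Finset.sum_congr rfl
      intro j _
      rw [Nat.add_comm j 1]
    have h5 : ∑ i ∈ Finset.Ico 1 N, |γ i| ≤ ∑ j ∈ Finset.range N, |γ j| := by
      rw [Finset.range_eq_Ico]
      apply Finset.sum_le_sum_of_subset_of_nonneg (Finset.Ico_subset_Ico (by omega) le_rfl)
      intro j _ _
      positivity
    linarith
  linarith


end MLEAux

open Matrix MeasureTheory Filter ProbabilityTheory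
open MLEAux

/-- Strong consistency of the maximum likelihood estimator of the drift `θ` in the
model `X_t = θt + B_t`, where `B` is a centered Gaussian process with nonsingular
finite-dimensional distributions whose increment covariance over the grid of mesh
`h` tends to zero. -/
theorem mle_strongly_consistent
    {Ω : Type*} [MeasureSpace Ω] (P : Measure Ω) [IsProbabilityMeasure P]
    (h θ : ℝ) (hh : 0 < h)
    (B : ℝ → Ω → ℝ)
    (hB0 : ∀ᵐ ω ∂P, B 0 ω = 0)
    (γ : ℕ → ℝ)
    (hγdef : ∀ k : ℕ,
      γ k = ∫ ω, (B ((k + 1 : ℕ) * h) ω - B (k * h) ω) * B h ω ∂P)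
    (Γ : (N : ℕ) → Matrix (Fin N) (Fin N) ℝ)
    (hΓdef : ∀ (N : ℕ) (l m : Fin N), Γ N l m = γ (Nat.dist l m))
    (hgauss : ∀ (N : ℕ) (a : Fin N → ℝ),
      Measure.map (fun ω => ∑ k : Fin N,
          a k * (B ((k + 1 : ℕ) * h) ω - B ((k : ℕ) * h) ω)) P =
        gaussianReal 0 (Real.toNNReal (a ⬝ᵥ Γ N *ᵥ a)))
    (hΓpos : ∀ N : ℕ, (Γ N).PosDef)
    (hγ0 : Tendsto γ atTop (nhds 0))
    (X : ℝ → Ω → ℝ) (hX : ∀ t ω, X t ω = θ * t + B t ω)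
    (z : (N : ℕ) → Fin N → ℝ) (hz : ∀ (N : ℕ) (k : Fin N), z N k = h)
    (ΔX : (N : ℕ) → Ω → Fin N → ℝ)
    (hΔX : ∀ (N : ℕ) (ω : Ω) (k : Fin N),
      ΔX N ω k = X ((k + 1 : ℕ) * h) ω - X ((k : ℕ) * h) ω)
    (θhat : (N : ℕ) → Ω → ℝ)
    (hθhat : ∀ (N : ℕ) (ω : Ω), θhat N ω =
      (z N ⬝ᵥ (Γ N)⁻¹ *ᵥ ΔX N ω) / (z N ⬝ᵥ (Γ N)⁻¹ *ᵥ z N)) :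
    ∀ᵐ ω ∂P, Tendsto (fun N : ℕ => θhat N ω) atTop (nhds θ) := by
  classical
  set ΔB : (N : ℕ) → Ω → Fin N → ℝ :=
    fun N ω k => B ((k + 1 : ℕ) * h) ω - B ((k : ℕ) * h) ω with hΔB
  set w : (N : ℕ) → Fin N → ℝ := fun N => (Γ N)⁻¹ *ᵥ z N with hwdef
  set v : ℕ → ℝ := fun N => z N ⬝ᵥ w N with hvdef
  set a : (N : ℕ) → Fin N → ℝ := fun N => (v N)⁻¹ • w N with hadef
  set Yf : ℕ → Ω → ℝ :=
    fun N ω => ∑ k : Fin N, a N k * (B ((k + 1 : ℕ) * h) ω - B ((k : ℕ) * h) ω) with hYdef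
  set rr : ℕ → ℝ := fun N => (v N)⁻¹ with hrrdef
  have hsym : ∀ N, (Γ N)ᵀ = Γ N := by
    intro N; ext i j
    rw [Matrix.transpose_apply, hΓdef, hΓdef, Nat.dist_comm]
  have hdet : ∀ N, IsUnit (Γ N).det :=
    fun N => isUnit_iff_ne_zero.2 (ne_of_gt (hΓpos N).det_pos)
  have hinvsym : ∀ N, ((Γ N)⁻¹)ᵀ = (Γ N)⁻¹ := by
    intro N; rw [Matrix.transpose_nonsing_inv, hsym]
  have hΓw : ∀ N, Γ N *ᵥ w N = z N := by
    intro N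
    show Γ N *ᵥ ((Γ N)⁻¹ *ᵥ z N) = z N
    rw [Matrix.mulVec_mulVec, Matrix.mul_nonsing_inv _ (hdet N), Matrix.one_mulVec]
  have symm_dot : ∀ (N : ℕ) (x y : Fin N → ℝ), x ⬝ᵥ (Γ N *ᵥ y) = y ⬝ᵥ (Γ N *ᵥ x) := by
    intro N x y
    rw [dotProduct_mulVec]
    conv_lhs => rw [← hsym N]
    rw [Matrix.vecMul_transpose, dotProduct_comm]
  have hzne : ∀ N, 0 < N → z N ≠ 0 := by
    intro N hN hcon
    have h1 := congrFun hcon ⟨0, hN⟩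
    rw [hz] at h1
    exact absurd h1 (ne_of_gt hh)
  have hwne : ∀ N, 0 < N → w N ≠ 0 := by
    intro N hN hcon
    apply hzne N hN
    rw [← hΓw N, hcon, Matrix.mulVec_zero]
  have hvpos : ∀ N, 0 < N → 0 < v N := by
    intro N hN
    have h1 := (hΓpos N).dotProduct_mulVec_pos (hwne N hN)
    rw [star_trivial, hΓw N] at h1
    show 0 < z N ⬝ᵥ w N
    rwa [dotProduct_comm]
  have hrrpos : ∀ N, 0 < N → 0 < rr N := fun N hN => inv_pos.2 (hvpos N hN)
  have hYdot : ∀ N ω, Yf N ω = a N ⬝ᵥ ΔB N ω := fun N ω => rfl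
  have hΓa : ∀ N, Γ N *ᵥ a N = (v N)⁻¹ • z N := by
    intro N
    show Γ N *ᵥ ((v N)⁻¹ • w N) = (v N)⁻¹ • z N
    rw [Matrix.mulVec_smul, hΓw]
  have hquad : ∀ N, 0 < N → a N ⬝ᵥ Γ N *ᵥ a N = rr N := by
    intro N hN
    rw [hΓa N]
    show ((v N)⁻¹ • w N) ⬝ᵥ ((v N)⁻¹ • z N) = (v N)⁻¹
    rw [smul_dotProduct, dotProduct_smul, dotProduct_comm,
      smul_eq_mul, smul_eq_mul]
    have e0 : z N ⬝ᵥ w N = v N := rfl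
    rw [e0]
    have hvne : v N ≠ 0 := ne_of_gt (hvpos N hN)
    field_simp
  have hlaw : ∀ N, 0 < N →
      Measure.map (Yf N) P = gaussianReal 0 (Real.toNNReal (rr N)) := by
    intro N hN
    have h1 := hgauss N (a N)
    rw [hquad N hN] at h1
    exact h1
  have hdot_az : ∀ N, 0 < N → a N ⬝ᵥ z N = 1 := by
    intro N hN
    show ((v N)⁻¹ • w N) ⬝ᵥ z N = 1
    rw [smul_dotProduct, smul_eq_mul, dotProduct_comm]
    have e0 : z N ⬝ᵥ w N = v N := rfl
    rw [e0]
    have hvne : v N ≠ 0 := ne_of_gt (hvpos N hN)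
    field_simp
  have hpadz : ∀ m n, m ≤ n → 0 < m → pad m n (a m) ⬝ᵥ z n = 1 := by
    intro m n hmn hm
    have e1 : pad m n (a m) ⬝ᵥ z n = ∑ k : Fin n, pad m n (a m) k * h := by
      unfold dotProduct
      apply Finset.sum_congr rfl
      intro k _
      rw [hz]
    have e3 : ∑ k : Fin n, pad m n (a m) k * h = ∑ k : Fin m, a m k * h :=
      pad_sum hmn (a m) (fun _ => h)
    have e2 : ∑ k : Fin m, a m k * h = a m ⬝ᵥ z m := by
      unfold dotProduct
      apply Finset.sum_congr rfl
      intro k _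
      rw [hz]
    rw [e1, e3, e2, hdot_az m hm]
  have hvar_diff : ∀ m n, 0 < m → m ≤ n →
      (pad m n (a m) - a n) ⬝ᵥ Γ n *ᵥ (pad m n (a m) - a n) = rr m - rr n := by
    intro m n hm hmn
    have hn : 0 < n := lt_of_lt_of_le hm hmn
    rw [sub_dotProduct, Matrix.mulVec_sub, dotProduct_sub,
      dotProduct_sub]
    have p1 : pad m n (a m) ⬝ᵥ (Γ n *ᵥ pad m n (a m)) = rr m := by
      rw [pad_quad γ Γ hΓdef hmn, hquad m hm]
    have p2 : pad m n (a m) ⬝ᵥ (Γ n *ᵥ a n) = rr n := by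
      rw [hΓa n, dotProduct_smul, hpadz m n hmn hm, smul_eq_mul, mul_one]
    have p3 : a n ⬝ᵥ (Γ n *ᵥ pad m n (a m)) = rr n := by
      rw [symm_dot, p2]
    have p4 : a n ⬝ᵥ (Γ n *ᵥ a n) = rr n := hquad n hn
    rw [p1, p2, p3, p4]
    ring
  have hdiff_fun : ∀ m n, m ≤ n → (fun ω => Yf m ω - Yf n ω)
      = fun ω => ∑ k : Fin n,
        (pad m n (a m) - a n) k * (B ((k + 1 : ℕ) * h) ω - B ((k : ℕ) * h) ω) := by
    intro m n hmn
    funext ω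
    have h1 : ∑ k : Fin n,
        (pad m n (a m) - a n) k * (B ((k + 1 : ℕ) * h) ω - B ((k : ℕ) * h) ω)
        = ∑ k : Fin n, pad m n (a m) k * (B ((k + 1 : ℕ) * h) ω - B ((k : ℕ) * h) ω)
          - ∑ k : Fin n, a n k * (B ((k + 1 : ℕ) * h) ω - B ((k : ℕ) * h) ω) := by
      rw [← Finset.sum_sub_distrib]
      apply Finset.sum_congr rfl
      intro k _
      simp only [Pi.sub_apply, sub_mul]
    have h2 : ∑ k : Fin n, pad m n (a m) k * (B ((k + 1 : ℕ) * h) ω - B ((k : ℕ) * h) ω)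
        = ∑ k : Fin m, a m k * (B ((k + 1 : ℕ) * h) ω - B ((k : ℕ) * h) ω) :=
      pad_sum hmn (a m) (fun i => B ((i + 1 : ℕ) * h) ω - B ((i : ℕ) * h) ω)
    rw [h1, h2]
  have hlaw_diff : ∀ m n, 0 < m → m ≤ n →
      Measure.map (fun ω => Yf m ω - Yf n ω) P
        = gaussianReal 0 (Real.toNNReal (rr m - rr n)) := by
    intro m n hm hmn
    rw [hdiff_fun m n hmn]
    have h1 := hgauss n (pad m n (a m) - a n)
    rw [hvar_diff m n hm hmn] at h1
    exact h1
  have hanti : ∀ m n, 0 < m → m ≤ n → rr n ≤ rr m := by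
    intro m n hm hmn
    have h1 := (hΓpos n).posSemidef.dotProduct_mulVec_nonneg (pad m n (a m) - a n)
    rw [star_trivial, hvar_diff m n hm hmn] at h1
    linarith
  -- upper bound for S = z ⬝ᵥ Γ z
  have hS : ∀ N : ℕ, 0 < N → z N ⬝ᵥ Γ N *ᵥ z N
      ≤ h^2 * ((N:ℝ) * (2 * ∑ j ∈ Finset.range N, |γ j|)) := by
    intro N hN
    have e1 : z N ⬝ᵥ Γ N *ᵥ z N = ∑ k : Fin N, ∑ l : Fin N, h * (γ (Nat.dist (k:ℕ) (l:ℕ)) * h) := by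
      unfold dotProduct Matrix.mulVec dotProduct
      apply Finset.sum_congr rfl
      intro k _
      rw [hz, Finset.mul_sum]
      apply Finset.sum_congr rfl
      intro l _
      simp only [hz, hΓdef]
    rw [e1]
    have e2 : ∀ k : Fin N, ∑ l : Fin N, h * (γ (Nat.dist (k:ℕ) (l:ℕ)) * h)
        ≤ h * h * (2 * ∑ j ∈ Finset.range N, |γ j|) := by
      intro k
      have e3 : ∑ l : Fin N, h * (γ (Nat.dist (k:ℕ) (l:ℕ)) * h)
          ≤ ∑ l : Fin N, h * (|γ (Nat.dist (k:ℕ) (l:ℕ))| * h) := by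
        apply Finset.sum_le_sum
        intro l _
        have h6 := le_abs_self (γ (Nat.dist (k:ℕ) (l:ℕ)))
        exact mul_le_mul_of_nonneg_left (mul_le_mul_of_nonneg_right h6 hh.le) hh.le
      have e6 : ∑ l : Fin N, |γ (Nat.dist (k:ℕ) (l:ℕ))|
          = ∑ l ∈ Finset.range N, |γ (Nat.dist (k:ℕ) l)| :=
        Fin.sum_univ_eq_sum_range (fun i => |γ (Nat.dist (k:ℕ) i)|) N
      have e4 : ∑ l : Fin N, h * (|γ (Nat.dist (k:ℕ) (l:ℕ))| * h)
          = h * h * ∑ l ∈ Finset.range N, |γ (Nat.dist (k:ℕ) l)| := by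
        rw [← e6, Finset.mul_sum]
        apply Finset.sum_congr rfl
        intro l _
        ring
      have e5 := dist_sum_bound γ N (k:ℕ) k.isLt
      calc ∑ l : Fin N, h * (γ (Nat.dist (k:ℕ) (l:ℕ)) * h)
          ≤ ∑ l : Fin N, h * (|γ (Nat.dist (k:ℕ) (l:ℕ))| * h) := e3
        _ = h * h * ∑ l ∈ Finset.range N, |γ (Nat.dist (k:ℕ) l)| := e4
        _ ≤ h * h * (2 * ∑ j ∈ Finset.range N, |γ j|) := by
            apply mul_le_mul_of_nonneg_left e5 (by positivity)
    calc ∑ k : Fin N, ∑ l : Fin N, h * (γ (Nat.dist (k:ℕ) (l:ℕ)) * h)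
        ≤ ∑ _k : Fin N, h * h * (2 * ∑ j ∈ Finset.range N, |γ j|) :=
          Finset.sum_le_sum (fun k _ => e2 k)
      _ = h^2 * ((N:ℝ) * (2 * ∑ j ∈ Finset.range N, |γ j|)) := by
          rw [Finset.sum_const, Finset.card_univ, Fintype.card_fin, nsmul_eq_mul]
          ring
  have hzz : ∀ N : ℕ, z N ⬝ᵥ z N = h^2 * (N:ℝ) := by
    intro N
    have e1 : z N ⬝ᵥ z N = ∑ _k : Fin N, h * h := by
      unfold dotProduct
      apply Finset.sum_congr rfl
      intro k _
      rw [hz]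
    rw [e1, Finset.sum_const, Finset.card_univ, Fintype.card_fin, nsmul_eq_mul]
    try ring
  have hvlow : ∀ N : ℕ, 0 < N →
      (z N ⬝ᵥ z N)^2 / (z N ⬝ᵥ Γ N *ᵥ z N) ≤ v N := by
    intro N hN
    have hSpos : 0 < z N ⬝ᵥ Γ N *ᵥ z N := by
      have h1 := (hΓpos N).dotProduct_mulVec_pos (hzne N hN)
      rwa [star_trivial] at h1
    set S : ℝ := z N ⬝ᵥ Γ N *ᵥ z N with hSS
    set t : ℝ := (z N ⬝ᵥ z N) / S with htt
    have hpos := (hΓpos N).posSemidef.dotProduct_mulVec_nonneg (t • z N - w N)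
    rw [star_trivial] at hpos
    have hexp : (t • z N - w N) ⬝ᵥ Γ N *ᵥ (t • z N - w N)
        = t^2 * S - 2*t*(z N ⬝ᵥ z N) + v N := by
      rw [sub_dotProduct, Matrix.mulVec_sub, Matrix.mulVec_smul,
        dotProduct_sub, dotProduct_sub,
        smul_dotProduct, smul_dotProduct,
        dotProduct_smul, dotProduct_smul]
      have p1 : z N ⬝ᵥ (Γ N *ᵥ w N) = z N ⬝ᵥ z N := by rw [hΓw]
      have p2 : w N ⬝ᵥ (Γ N *ᵥ z N) = z N ⬝ᵥ z N := by rw [symm_dot, hΓw]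
      have p3 : w N ⬝ᵥ (Γ N *ᵥ w N) = v N := by
        rw [hΓw, dotProduct_comm]
      rw [p1, p2, p3]
      simp only [smul_eq_mul]
      try ring
    rw [hexp] at hpos
    have h2 : t^2 * S - 2*t*(z N ⬝ᵥ z N) + v N = v N - (z N ⬝ᵥ z N)^2 / S := by
      rw [htt]
      field_simp
      ring
    rw [h2] at hpos
    linarith
  have hrrbound : ∀ N : ℕ, 0 < N →
      rr N ≤ 2 * (∑ j ∈ Finset.range N, |γ j|) / (h^2 * (N:ℝ)) := by
    intro N hN
    have hNR : (0:ℝ) < (N:ℝ) := Nat.cast_pos.2 hN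
    have hSpos : 0 < z N ⬝ᵥ Γ N *ᵥ z N := by
      have h1 := (hΓpos N).dotProduct_mulVec_pos (hzne N hN)
      rwa [star_trivial] at h1
    have hzzpos : 0 < z N ⬝ᵥ z N := by rw [hzz]; positivity
    have hvN := hvpos N hN
    have h1 := hvlow N hN
    have h3 : rr N ≤ (z N ⬝ᵥ Γ N *ᵥ z N) / (z N ⬝ᵥ z N)^2 := by
      have hq : 0 < (z N ⬝ᵥ z N)^2 / (z N ⬝ᵥ Γ N *ᵥ z N) := by positivity
      have h4 : (v N)⁻¹ ≤ ((z N ⬝ᵥ z N)^2 / (z N ⬝ᵥ Γ N *ᵥ z N))⁻¹ :=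
        inv_anti₀ hq h1
      have h5 : ((z N ⬝ᵥ z N)^2 / (z N ⬝ᵥ Γ N *ᵥ z N))⁻¹
          = (z N ⬝ᵥ Γ N *ᵥ z N) / (z N ⬝ᵥ z N)^2 := by
        rw [inv_div]
      show (v N)⁻¹ ≤ _
      rw [← h5]
      exact h4
    have h6 : (z N ⬝ᵥ Γ N *ᵥ z N) / (z N ⬝ᵥ z N)^2
        ≤ (h^2 * ((N:ℝ) * (2 * ∑ j ∈ Finset.range N, |γ j|))) / (z N ⬝ᵥ z N)^2 := by
      apply div_le_div_of_nonneg_right ?_ (by positivity)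
      · exact hS N hN
    have h7 : (h^2 * ((N:ℝ) * (2 * ∑ j ∈ Finset.range N, |γ j|))) / (z N ⬝ᵥ z N)^2
        = 2 * (∑ j ∈ Finset.range N, |γ j|) / (h^2 * (N:ℝ)) := by
      rw [hzz]
      field_simp
    linarith
  have hT0 : Tendsto (fun N : ℕ => 2 * (∑ j ∈ Finset.range N, |γ j|) / (h^2 * (N:ℝ)))
      atTop (nhds 0) := by
    have habs : Tendsto (fun n => |γ n|) atTop (nhds 0) := by
      have := hγ0.abs
      rwa [abs_zero] at this
    have hces := habs.cesaro
    have heq : (fun N : ℕ => 2 * (∑ j ∈ Finset.range N, |γ j|) / (h^2 * (N:ℝ)))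
        = fun N : ℕ => (2/h^2) * ((N:ℝ)⁻¹ * ∑ j ∈ Finset.range N, |γ j|) := by
      funext N
      rcases Nat.eq_zero_or_pos N with h0 | hpos
      · subst h0; simp
      · have hNne : (N:ℝ) ≠ 0 := Nat.cast_ne_zero.2 (Nat.pos_iff_ne_zero.1 hpos)
        field_simp
        try ring
    rw [heq]
    have := hces.const_mul (2/h^2)
    rwa [mul_zero] at this
  have hrrt : Tendsto (fun i : ℕ => rr (i+1)) atTop (nhds 0) := by
    apply squeeze_zero (fun i => (hrrpos (i+1) (Nat.succ_pos i)).le)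
      (fun i => hrrbound (i+1) (Nat.succ_pos i))
    exact (tendsto_add_atTop_iff_nat 1).2 hT0
  have hae := abstract_main P (fun i => Yf (i+1)) (fun i => rr (i+1))
    (fun i => hrrpos (i+1) (Nat.succ_pos i))
    (fun i j hij => hanti (i+1) (j+1) (Nat.succ_pos i) (by omega))
    hrrt
    (fun i => hlaw (i+1) (Nat.succ_pos i))
    (fun i j hij => hlaw_diff (i+1) (j+1) (Nat.succ_pos i) (by omega))
  -- identity θhat = θ + Yf
  have hident : ∀ N, 0 < N → ∀ ω, θhat N ω = θ + Yf N ω := by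
    intro N hN ω
    have hvne : v N ≠ 0 := ne_of_gt (hvpos N hN)
    have hhne : h ≠ 0 := ne_of_gt hh
    rw [hθhat]
    have hΔXeq : ΔX N ω = fun k : Fin N =>
        θ*h + (B ((k + 1 : ℕ) * h) ω - B ((k : ℕ) * h) ω) := by
      funext k
      rw [hΔX, hX, hX]
      push_cast
      ring
    rw [hΔXeq]
    have hsplit : (fun k : Fin N => θ*h + (B ((k + 1 : ℕ) * h) ω - B ((k : ℕ) * h) ω))
        = (θ*h) • (fun _ : Fin N => (1:ℝ)) + ΔB N ω := by
      funext k
      simp only [Pi.add_apply, Pi.smul_apply, smul_eq_mul, mul_one]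
      rfl
    rw [hsplit, Matrix.mulVec_add, Matrix.mulVec_smul, dotProduct_add,
      dotProduct_smul]
    have hz1 : z N = h • (fun _ : Fin N => (1:ℝ)) := by
      funext k
      simp only [Pi.smul_apply, smul_eq_mul, mul_one, hz]
    have hkey : h * (z N ⬝ᵥ (Γ N)⁻¹ *ᵥ (fun _ : Fin N => (1:ℝ))) = v N := by
      have e1 : v N = z N ⬝ᵥ (Γ N)⁻¹ *ᵥ z N := rfl
      have e2 : (Γ N)⁻¹ *ᵥ z N = h • ((Γ N)⁻¹ *ᵥ (fun _ : Fin N => (1:ℝ))) := by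
        rw [hz1, Matrix.mulVec_smul]
      rw [e1, e2, dotProduct_smul, smul_eq_mul]
    have hone : z N ⬝ᵥ (Γ N)⁻¹ *ᵥ (fun _ : Fin N => (1:ℝ)) = v N / h := by
      rw [eq_div_iff hhne]
      linarith [hkey]
    have hrest : z N ⬝ᵥ (Γ N)⁻¹ *ᵥ ΔB N ω = w N ⬝ᵥ ΔB N ω := by
      rw [dotProduct_mulVec]
      have e1 : z N ᵥ* (Γ N)⁻¹ = w N := by
        conv_lhs => rw [← hinvsym N]
        rw [Matrix.vecMul_transpose]
      rw [e1]
    have hden : z N ⬝ᵥ (Γ N)⁻¹ *ᵥ z N = v N := rfl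
    have hYeq : Yf N ω = (v N)⁻¹ * (w N ⬝ᵥ ΔB N ω) := by
      rw [hYdot N ω]
      show ((v N)⁻¹ • w N) ⬝ᵥ ΔB N ω = _
      rw [smul_dotProduct, smul_eq_mul]
    rw [hone, hrest, hden, hYeq, smul_eq_mul]
    field_simp
  filter_upwards [hae] with ω hω
  have h1 : Tendsto (fun i : ℕ => θhat (i+1) ω) atTop (nhds θ) := by
    have h2 : (fun i : ℕ => θhat (i+1) ω) = fun i => θ + Yf (i+1) ω :=
      funext fun i => hident (i+1) (Nat.succ_pos i) ω
    rw [h2]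
    have h3 := hω.const_add θ
    rwa [add_zero] at h3
  exact (tendsto_add_atTop_iff_nat 1).1 h1
end

section
/- Let H ∈ (1/2, 1) and T > 0. Then for every t ∈ (0, T), ∫₀ᵀ H(2H - 1) |t - s|^{2H - 2} · C_H · s^{1/2 - H} (T - s)^{1/2 - H} ds = 1, where C_H = (H(2H - 1) B(H - 1/2, 3/2 - H))⁻¹ and B denotes the Euler Beta function. Equivalently, the function h_T(s) = C_H s^{1/2 - H}(T - s)^{1/2 - H} belongs to L²[0, T] and satisfies Γ_T^H h_T = 1 on (0, T), where (Γ_T^H f)(t) = ∫₀ᵀ H(2H - 1)|t - s|^{2H - 2} f(s) ds. -/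
open MeasureTheory intervalIntegral Set
open scoped ENNReal

/-- The Euler Beta function. -/
noncomputable def eulerBeta (a b : ℝ) : ℝ :=
  Real.Gamma a * Real.Gamma b / Real.Gamma (a + b)

lemma eulerBeta_pos {p q : ℝ} (hp : 0 < p) (hq : 0 < q) : 0 < eulerBeta p q :=
  div_pos (mul_pos (Real.Gamma_pos_of_pos hp) (Real.Gamma_pos_of_pos hq))
    (Real.Gamma_pos_of_pos (by linarith))

/-- real Beta integral evaluation -/
lemma integral_beta {p q : ℝ} (hp : 0 < p) (hq : 0 < q) :
    ∫ x in (0:ℝ)..1, x ^ (p - 1) * (1 - x) ^ (q - 1) = eulerBeta p q := by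
  have h := Complex.Gamma_mul_Gamma_eq_betaIntegral (s := p) (t := q)
    (by simpa using hp) (by simpa using hq)
  have hβ : Complex.betaIntegral p q
      = ((∫ x in (0:ℝ)..1, x ^ (p - 1) * (1 - x) ^ (q - 1) : ℝ) : ℂ) := by
    rw [Complex.betaIntegral, ← intervalIntegral.integral_ofReal]
    refine intervalIntegral.integral_congr (fun x hx => ?_)
    rw [Set.uIcc_of_le (by norm_num : (0:ℝ) ≤ 1)] at hx
    push_cast
    rw [show ((p:ℂ)-1) = ((p-1:ℝ):ℂ) by push_cast; ring,
      show ((q:ℂ)-1) = ((q-1:ℝ):ℂ) by push_cast; ring,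
      show (1 - (x:ℂ)) = ((1-x:ℝ):ℂ) by push_cast; ring,
      ← Complex.ofReal_cpow hx.1, ← Complex.ofReal_cpow (by linarith [hx.2]),
      ← Complex.ofReal_mul]
  rw [hβ, show ((p:ℂ)+(q:ℂ)) = ((p+q:ℝ):ℂ) by push_cast; ring,
    Complex.Gamma_ofReal, Complex.Gamma_ofReal, Complex.Gamma_ofReal] at h
  have h2 : Real.Gamma p * Real.Gamma q
      = Real.Gamma (p+q) * ∫ x in (0:ℝ)..1, x ^ (p - 1) * (1 - x) ^ (q - 1) := by
    exact_mod_cast h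
  have hGpos : 0 < Real.Gamma (p+q) := Real.Gamma_pos_of_pos (by linarith)
  rw [eulerBeta, eq_div_iff hGpos.ne']
  linarith [h2]

/-- interval integrability of `(x-c)^p` -/
lemma ii_left {p : ℝ} (hp : -1 < p) (c a b : ℝ) :
    IntervalIntegrable (fun x => (x - c) ^ p) volume a b := by
  simpa using (intervalIntegrable_rpow' hp (a := a - c) (b := b - c)).comp_sub_right c

/-- interval integrability of `(d-x)^q` -/
lemma ii_right {q : ℝ} (hq : -1 < q) (d a b : ℝ) :
    IntervalIntegrable (fun x => (d - x) ^ q) volume a b := by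
  simpa using (intervalIntegrable_rpow' hq (a := d - a) (b := d - b)).comp_sub_left d

/-- interval integrability of the (shifted) beta integrand -/
lemma ii_beta {p q : ℝ} (hp : -1 < p) (hq : -1 < q) {c d : ℝ} (hcd : c < d) :
    IntervalIntegrable (fun x => (x - c) ^ p * (d - x) ^ q) volume c d := by
  set m := (c + d) / 2 with hm
  have hcm : c < m := by rw [hm]; linarith
  have hmd : m < d := by rw [hm]; linarith
  have h1 : IntervalIntegrable (fun x => (x - c) ^ p * (d - x) ^ q) volume c m := by
    apply (ii_left hp c c m).mul_continuousOn
    apply ContinuousOn.rpow_const (by fun_prop)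
    intro x hx
    rw [Set.uIcc_of_le hcm.le] at hx
    left; have := hx.2; intro h0; nlinarith [hx.2]
  have h2 : IntervalIntegrable (fun x => (x - c) ^ p * (d - x) ^ q) volume m d := by
    have := (ii_right hq d m d).continuousOn_mul (g := fun x => (x - c) ^ p) ?_
    · simpa [mul_comm] using this
    apply ContinuousOn.rpow_const (by fun_prop)
    intro x hx
    rw [Set.uIcc_of_le hmd.le] at hx
    left; intro h0; nlinarith [hx.1]
  exact h1.trans h2

/-- shifted beta integral evaluation -/
lemma integral_beta_shift {p q : ℝ} (hp : 0 < p) (hq : 0 < q) {c d : ℝ} (hcd : c < d) :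
    ∫ s in c..d, (s - c) ^ (p - 1) * (d - s) ^ (q - 1)
      = (d - c) ^ (p + q - 1) * eulerBeta p q := by
  have hdc : (0:ℝ) < d - c := by linarith
  have e0 : ∫ x in (0:ℝ)..(d - c), (x + c - c) ^ (p - 1) * (d - (x + c)) ^ (q - 1)
      = ∫ s in c..d, (s - c) ^ (p - 1) * (d - s) ^ (q - 1) := by
    rw [intervalIntegral.integral_comp_add_right
      (fun s => (s - c) ^ (p - 1) * (d - s) ^ (q - 1)) c]
    norm_num
  have e1 : ∫ s in c..d, (s - c) ^ (p - 1) * (d - s) ^ (q - 1)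
      = ∫ x in (0:ℝ)..(d - c), x ^ (p - 1) * (d - c - x) ^ (q - 1) := by
    rw [← e0]
    refine intervalIntegral.integral_congr (fun x hx => ?_)
    norm_num
    left
    congr 1
    ring
  have e2 : ∫ x in (0:ℝ)..(d - c), x ^ (p - 1) * (d - c - x) ^ (q - 1)
      = (d - c) • ∫ y in (0:ℝ)..1, ((d - c) * y) ^ (p - 1) * (d - c - (d - c) * y) ^ (q - 1) := by
    rw [intervalIntegral.integral_comp_mul_left
      (fun x => x ^ (p - 1) * (d - c - x) ^ (q - 1)) hdc.ne', smul_smul]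
    rw [mul_inv_cancel₀ hdc.ne', one_smul, mul_zero, mul_one]
  rw [e1, e2]
  have e3 : ∫ y in (0:ℝ)..1, ((d - c) * y) ^ (p - 1) * (d - c - (d - c) * y) ^ (q - 1)
      = ∫ y in (0:ℝ)..1, (d - c) ^ (p + q - 2) * (y ^ (p - 1) * (1 - y) ^ (q - 1)) := by
    refine intervalIntegral.integral_congr (fun y hy => ?_)
    rw [Set.uIcc_of_le (by norm_num : (0:ℝ) ≤ 1)] at hy
    have h1 : d - c - (d - c) * y = (d - c) * (1 - y) := by ring
    rw [h1, Real.mul_rpow hdc.le hy.1, Real.mul_rpow hdc.le (by linarith [hy.2]),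
      show (d-c)^(p-1)*y^(p-1)*((d-c)^(q-1)*(1-y)^(q-1))
        = ((d-c)^(p-1)*(d-c)^(q-1))*(y^(p-1)*(1-y)^(q-1)) by ring,
      ← Real.rpow_add hdc, show p-1+(q-1) = p+q-2 by ring]
  rw [e3, intervalIntegral.integral_const_mul, integral_beta hp hq, smul_eq_mul,
    ← mul_assoc, show p + q - 1 = 1 + (p + q - 2) by ring, Real.rpow_add hdc,
    Real.rpow_one]

lemma rpow_alg {c1 D w ow b q : ℝ} (hc1 : 0 < c1) (hD : 0 < D) (hw : 0 < w) (how : 0 < ow) :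
    c1 / D ^ 2 * ((w / D) ^ (b - 1) * (c1 * ow / D) ^ (q - 1) * (c1 / D) ^ (-(b + q)))
      = c1 ^ (-b) * (w ^ (b - 1) * ow ^ (q - 1)) := by
  have h1 : c1 / D ^ 2 = Real.exp (Real.log c1 - 2 * Real.log D) := by
    rw [Real.exp_sub, Real.exp_log hc1,
      show (2:ℝ) * Real.log D = Real.log D + Real.log D by ring, Real.exp_add,
      Real.exp_log hD, pow_two]
  rw [h1, Real.rpow_def_of_pos (show (0:ℝ) < w / D by positivity),
    Real.rpow_def_of_pos (show (0:ℝ) < c1 * ow / D by positivity),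
    Real.rpow_def_of_pos (show (0:ℝ) < c1 / D by positivity),
    Real.rpow_def_of_pos hc1, Real.rpow_def_of_pos hw, Real.rpow_def_of_pos how,
    Real.log_div hw.ne' hD.ne', Real.log_div (by positivity) hD.ne',
    Real.log_mul hc1.ne' how.ne', Real.log_div hc1.ne' hD.ne']
  simp only [← Real.exp_add]
  congr 1
  ring

/-- Euler-type integral with matching parameters (binomial case). -/
lemma lemC {b q x : ℝ} (hb : 0 < b) (hq : 0 < q) (hx0 : 0 ≤ x) (hx1 : x < 1) :
    ∫ v in (0:ℝ)..1, v ^ (b - 1) * (1 - v) ^ (q - 1) * (1 - x * v) ^ (-(b + q))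
      = (1 - x) ^ (-b) * eulerBeta b q := by
  set c1 := 1 - x with hc1def
  have hc1 : 0 < c1 := by simp [hc1def]; linarith
  set φ : ℝ → ℝ := fun w => w / (c1 + x * w) with hφ
  have hDpos : ∀ w : ℝ, 0 < w → 0 < c1 + x * w := fun w hw => by nlinarith
  have hderiv : ∀ w ∈ Ioo (0:ℝ) 1,
      HasDerivWithinAt φ (c1 / (c1 + x * w) ^ 2) (Ioo 0 1) w := by
    intro w hw
    have hD := hDpos w hw.1
    have hden : HasDerivAt (fun y => c1 + x * y) x w := by
      have h := ((hasDerivAt_id' w).const_mul x).const_add c1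
      rwa [mul_one] at h
    have h0 : HasDerivAt φ ((1 * (c1 + x * w) - w * x) / (c1 + x * w) ^ 2) w :=
      (hasDerivAt_id w).div hden hD.ne'
    have h2 : (1 * (c1 + x * w) - w * x) / (c1 + x * w) ^ 2
        = c1 / (c1 + x * w) ^ 2 := by ring
    rw [h2] at h0
    exact h0.hasDerivWithinAt
  have hinj : InjOn φ (Ioo 0 1) := by
    intro w1 h1 w2 h2 he
    have hD1 := hDpos w1 h1.1
    have hD2 := hDpos w2 h2.1
    rw [hφ] at he
    field_simp at he
    rw [div_eq_iff (ne_of_gt (by linarith [mul_comm w1 x]))] at he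
    nlinarith [he]
  have himg : φ '' Ioo 0 1 = Ioo (0:ℝ) 1 := by
    apply Set.eq_of_subset_of_subset
    · rintro v ⟨w, hw, rfl⟩
      have hD := hDpos w hw.1
      constructor
      · exact div_pos hw.1 hD
      · show w / (c1 + x * w) < 1
        rw [div_lt_one hD]; nlinarith [hw.2]
    · intro v hv
      have hden : 0 < 1 - x * v := by nlinarith [hv.1, hv.2]
      refine ⟨v * c1 / (1 - x * v), ⟨div_pos (mul_pos hv.1 hc1) hden, ?_⟩, ?_⟩
      · rw [div_lt_one hden]; nlinarith [hv.2]
      · show (v * c1 / (1 - x * v)) / (c1 + x * (v * c1 / (1 - x * v))) = v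
        have hcc : c1 + x * (v * c1 / (1 - x * v)) = c1 / (1 - x * v) := by
          field_simp; ring
        rw [hcc]
        field_simp
        exact mul_div_cancel_right₀ v (by rw [mul_comm]; exact hden.ne')
  have key := MeasureTheory.integral_image_eq_integral_abs_deriv_smul measurableSet_Ioo
    hderiv hinj (fun v => v ^ (b - 1) * (1 - v) ^ (q - 1) * (1 - x * v) ^ (-(b + q)))
  rw [himg] at key
  have lhs_eq : ∫ v in (0:ℝ)..1, v ^ (b - 1) * (1 - v) ^ (q - 1) * (1 - x * v) ^ (-(b + q))
      = ∫ v in Ioo (0:ℝ) 1, v ^ (b - 1) * (1 - v) ^ (q - 1) * (1 - x * v) ^ (-(b + q)) := by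
    rw [intervalIntegral.integral_of_le (by norm_num : (0:ℝ) ≤ 1),
      MeasureTheory.integral_Ioc_eq_integral_Ioo]
  have rhs_eq : ∫ w in Ioo (0:ℝ) 1, |c1 / (c1 + x * w) ^ 2|
        • (φ w ^ (b - 1) * (1 - φ w) ^ (q - 1) * (1 - x * φ w) ^ (-(b + q)))
      = ∫ w in Ioo (0:ℝ) 1, c1 ^ (-b) * (w ^ (b - 1) * (1 - w) ^ (q - 1)) := by
    refine MeasureTheory.setIntegral_congr_fun measurableSet_Ioo (fun w hw => ?_)
    have hD := hDpos w hw.1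
    have hw1 : 0 < 1 - w := by linarith [hw.2]
    have e2 : 1 - φ w = c1 * (1 - w) / (c1 + x * w) := by
      rw [hφ]; simp only; rw [eq_div_iff hD.ne', sub_mul, div_mul_cancel₀ _ hD.ne', hc1def]; ring
    have e3 : 1 - x * φ w = c1 / (c1 + x * w) := by
      rw [hφ]; field_simp
      ring
    rw [smul_eq_mul, e2, e3]
    rw [abs_of_pos (show (0:ℝ) < c1 / (c1 + x * w) ^ 2 by positivity)]
    exact rpow_alg hc1 hD hw.1 hw1
  rw [lhs_eq, key, rhs_eq, MeasureTheory.integral_const_mul,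
    ← MeasureTheory.integral_Ioc_eq_integral_Ioo,
    ← intervalIntegral.integral_of_le (by norm_num : (0:ℝ) ≤ 1),
    integral_beta hb hq]

lemma rpow_alg2 {s t a : ℝ} (hs : 0 < s) (ht : 0 < t) (hts : 0 < t - s) :
    s ^ (1:ℝ) * (s ^ (-(2*a)) * s ^ (a-1) * t ^ (a-1)) * ((t-s)/t) ^ (-(1-2*a))
      = (t-s) ^ (2*a-1) * (t*s) ^ (-a) := by
  simp only [Real.rpow_def_of_pos hs, Real.rpow_def_of_pos ht,
    Real.rpow_def_of_pos (div_pos hts ht), Real.rpow_def_of_pos hts,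
    Real.rpow_def_of_pos (mul_pos ht hs), Real.log_div hts.ne' ht.ne',
    Real.log_mul ht.ne' hs.ne', ← Real.exp_add]
  congr 1
  ring

lemma lemD {a s t : ℝ} (ha0 : 0 < a) (ha1 : a < 1/2) (hs : 0 < s) (hst : s < t) :
    ∫ u in (0:ℝ)..s, u ^ (-(2*a)) * (t - u) ^ (a - 1) * (s - u) ^ (a - 1)
      = eulerBeta (1 - 2*a) a * ((t - s) ^ (2*a - 1) * (t * s) ^ (-a)) := by
  have ht : 0 < t := hs.trans hst
  have hts : 0 < t - s := by linarith
  set f : ℝ → ℝ := fun u => u ^ (-(2*a)) * (t - u) ^ (a - 1) * (s - u) ^ (a - 1) with hf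
  have e1 : ∫ v in (0:ℝ)..1, f (s * v) = s⁻¹ • ∫ u in (0:ℝ)..s, f u := by
    have := intervalIntegral.integral_comp_mul_left f hs.ne' (a := 0) (b := 1)
    simpa using this
  have e1' : ∫ u in (0:ℝ)..s, f u = s * ∫ v in (0:ℝ)..1, f (s * v) := by
    rw [e1, smul_eq_mul, ← mul_assoc, mul_inv_cancel₀ hs.ne', one_mul]
  set K : ℝ := s ^ (-(2*a)) * s ^ (a-1) * t ^ (a-1) with hK
  have e2 : ∫ v in (0:ℝ)..1, f (s * v)
      = ∫ v in (0:ℝ)..1, K * (v ^ ((1-2*a) - 1) * (1 - v) ^ (a - 1)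
          * (1 - (s/t) * v) ^ (-((1-2*a) + a))) := by
    refine intervalIntegral.integral_congr (fun v hv => ?_)
    rw [Set.uIcc_of_le (by norm_num : (0:ℝ) ≤ 1)] at hv
    have hv0 := hv.1
    have hv1 := hv.2
    have g1 : t - s * v = t * (1 - (s/t) * v) := by field_simp
    have g2 : s - s * v = s * (1 - v) := by ring
    have h1v : (0:ℝ) ≤ 1 - v := by linarith
    have hxv : (0:ℝ) ≤ 1 - (s/t) * v := by
      have h2 : s / t * v ≤ s / t := by
        apply mul_le_of_le_one_right (le_of_lt (div_pos hs ht)) hv1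
      have h3 : s / t < 1 := (div_lt_one ht).mpr hst
      linarith
    rw [hf]
    simp only
    rw [g1, g2, Real.mul_rpow hs.le hv0, Real.mul_rpow ht.le hxv,
      Real.mul_rpow hs.le h1v, hK]
    rw [show ((1-2*a) - 1 : ℝ) = -(2*a) by ring, show (-((1-2*a) + a) : ℝ) = a - 1 by ring]
    ring
  rw [e1', e2, intervalIntegral.integral_const_mul,
    lemC (by linarith : (0:ℝ) < 1 - 2*a) ha0
      (le_of_lt (div_pos hs ht)) ((div_lt_one ht).mpr hst)]
  have g3 : 1 - s/t = (t-s)/t := by field_simp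
  rw [g3]
  have := rpow_alg2 (a := a) hs ht hts
  rw [Real.rpow_one] at this
  calc s * (K * (((t-s)/t) ^ (-(1-2*a)) * eulerBeta (1-2*a) a))
      = (s * K * ((t-s)/t) ^ (-(1-2*a))) * eulerBeta (1-2*a) a := by ring
    _ = ((t-s) ^ (2*a-1) * (t*s) ^ (-a)) * eulerBeta (1-2*a) a := by rw [hK, ← this]
    _ = eulerBeta (1 - 2*a) a * ((t - s) ^ (2*a - 1) * (t * s) ^ (-a)) := by ring

lemma integrableOn_betaType2 {p q : ℝ} (hp : -1 < p) (hq : -1 < q) {c d : ℝ} (hcd : c < d) :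
    IntegrableOn (fun x => (x - c) ^ p * (d - x) ^ q) (Ioo c d) volume := by
  have h := (ii_beta hp hq hcd).def'
  rw [Set.uIoc_of_le hcd.le] at h
  exact h.mono_set Ioo_subset_Ioc_self

lemma integrableOn_betaType {p q : ℝ} (hp : -1 < p) (hq : -1 < q) {c d : ℝ} (hcd : c < d)
    {φ : ℝ → ℝ} (hφ : ContinuousOn φ (Set.uIcc c d)) :
    IntegrableOn (fun x => (x - c) ^ p * (d - x) ^ q * φ x) (Ioo c d) volume := by
  have h := ((ii_beta hp hq hcd).mul_continuousOn hφ).def'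
  rw [Set.uIoc_of_le hcd.le] at h
  exact h.mono_set Ioo_subset_Ioc_self

lemma ii_J1 {a s t : ℝ} (ha0 : 0 < a) (ha1 : a < 1/2) (hs : 0 < s) (ht : 0 < t) (hne : s ≠ t) :
    IntegrableOn (fun u => u ^ (-(2*a)) * (t - u) ^ (a-1) * (s - u) ^ (a-1))
      (Ioo 0 (min s t)) volume := by
  rcases lt_or_gt_of_ne hne with h | h
  · rw [min_eq_left h.le]
    have cont : ContinuousOn (fun u : ℝ => (t - u) ^ (a-1)) (Set.uIcc 0 s) := by
      apply ContinuousOn.rpow_const (by fun_prop)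
      intro x hx
      rw [Set.uIcc_of_le hs.le] at hx
      left; have := hx.2; intro h0; nlinarith
    have hI := integrableOn_betaType (by linarith : (-1:ℝ) < -(2*a))
      (by linarith : (-1:ℝ) < a - 1) hs cont
    have heq : (fun u => u ^ (-(2*a)) * (t - u) ^ (a-1) * (s - u) ^ (a-1))
        = (fun u : ℝ => (u - 0) ^ (-(2*a)) * (s - u) ^ (a-1) * (t - u) ^ (a-1)) := by
      funext u; rw [sub_zero]; ring
    rw [heq]; exact hI
  · rw [min_eq_right h.le]
    have cont : ContinuousOn (fun u : ℝ => (s - u) ^ (a-1)) (Set.uIcc 0 t) := by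
      apply ContinuousOn.rpow_const (by fun_prop)
      intro x hx
      rw [Set.uIcc_of_le ht.le] at hx
      left; have := hx.2; intro h0; nlinarith
    have hI := integrableOn_betaType (by linarith : (-1:ℝ) < -(2*a))
      (by linarith : (-1:ℝ) < a - 1) ht cont
    have heq : (fun u => u ^ (-(2*a)) * (t - u) ^ (a-1) * (s - u) ^ (a-1))
        = (fun u : ℝ => (u - 0) ^ (-(2*a)) * (t - u) ^ (a-1) * (s - u) ^ (a-1)) := by
      funext u; rw [sub_zero]
    rw [heq]; exact hI

lemma main_integral {a t T : ℝ} (ha0 : 0 < a) (ha1 : a < 1/2) (ht0 : 0 < t) (htT : t < T) :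
    ∫ s in (0:ℝ)..T, |t - s| ^ (2*a-1) * s ^ (-a) * (T - s) ^ (-a)
      = eulerBeta a (1-a) := by
  have hT0 : (0:ℝ) < T := ht0.trans htT
  set c := eulerBeta (1-2*a) a with hcdef
  have hc : 0 < c := eulerBeta_pos (by linarith) ha0
  set Ba := eulerBeta a (1-a) with hBadef
  have hBa : 0 < Ba := eulerBeta_pos ha0 (by linarith)
  set F : ℝ → ℝ := fun s => |t - s| ^ (2*a-1) * s ^ (-a) * (T - s) ^ (-a) with hFdef
  set G : ℝ × ℝ → ℝ := fun p => (c⁻¹ * t ^ a * (T - p.2) ^ (-a))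
    * (p.1 ^ (-(2*a)) * (t - p.1) ^ (a-1) * (p.2 - p.1) ^ (a-1)) with hGdef
  set R : Set (ℝ × ℝ) := {p | 0 < p.1 ∧ p.1 < p.2 ∧ p.2 < T ∧ p.1 < t} with hRdef
  have hR : MeasurableSet R := by
    have hRe : R = {p : ℝ × ℝ | 0 < p.1} ∩ ({p | p.1 < p.2} ∩ ({p | p.2 < T} ∩ {p | p.1 < t})) := by
      ext p; simp only [hRdef, Set.mem_setOf_eq, Set.mem_inter_iff, and_assoc]
    rw [hRe]
    exact (measurableSet_lt measurable_const measurable_fst).inter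
      ((measurableSet_lt measurable_fst measurable_snd).inter
        ((measurableSet_lt measurable_snd measurable_const).inter
          (measurableSet_lt measurable_fst measurable_const)))
  have hGmeas : Measurable G := by
    rw [hGdef]
    exact (measurable_const.mul ((measurable_const.sub measurable_snd).pow_const _)).mul
      (((measurable_fst.pow_const _).mul
        ((measurable_const.sub measurable_fst).pow_const _)).mul
        ((measurable_snd.sub measurable_fst).pow_const _))
  set g : ℝ × ℝ → ℝ≥0∞ := fun p => R.indicator (fun p => ENNReal.ofReal (G p)) p with hgdef
  have hgmeas : Measurable g := (ENNReal.measurable_ofReal.comp hGmeas).indicator hR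
  -- Fact 1 : slice in u
  have fact1 : ∀ s ∈ Ioo (0:ℝ) T, s ≠ t → ENNReal.ofReal (F s) = ∫⁻ u, g (u, s) := by
    intro s hs hst
    set m := min s t with hmdef
    have hm0 : 0 < m := lt_min hs.1 ht0
    have hms : m ≤ s := min_le_left _ _
    have hmt : m ≤ t := min_le_right _ _
    have hslice : ∀ u, g (u, s)
        = (Ioo 0 m).indicator (fun u => ENNReal.ofReal (G (u, s))) u := by
      intro u
      show R.indicator (fun p => ENNReal.ofReal (G p)) (u, s)
        = (Ioo 0 m).indicator (fun u => ENNReal.ofReal (G (u, s))) u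
      by_cases hu : u ∈ Ioo 0 m
      · rw [Set.indicator_of_mem hu, Set.indicator_of_mem]
        exact ⟨hu.1, lt_of_lt_of_le hu.2 hms, hs.2, lt_of_lt_of_le hu.2 hmt⟩
      · rw [Set.indicator_of_notMem hu, Set.indicator_of_notMem]
        rintro ⟨h1, h2, _, h4⟩
        exact hu ⟨h1, lt_min h2 h4⟩
    have e1 : ∫⁻ u, g (u, s) = ∫⁻ u in Ioo 0 m, ENNReal.ofReal (G (u, s)) := by
      rw [← MeasureTheory.lintegral_indicator measurableSet_Ioo]
      exact lintegral_congr hslice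
    have hInt : IntegrableOn (fun u => G (u, s)) (Ioo 0 m) volume :=
      (ii_J1 ha0 ha1 hs.1 ht0 hst).const_mul (c⁻¹ * t ^ a * (T - s) ^ (-a))
    have hnn : 0 ≤ᵐ[volume.restrict (Ioo 0 m)] fun u => G (u, s) := by
      filter_upwards [MeasureTheory.ae_restrict_mem measurableSet_Ioo] with u hu
      rw [hGdef]
      have h1 : (0:ℝ) ≤ T - s := by linarith [hs.2]
      have h2 : (0:ℝ) ≤ t - u := by linarith [lt_of_lt_of_le hu.2 hmt]
      have h3 : (0:ℝ) ≤ s - u := by linarith [lt_of_lt_of_le hu.2 hms]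
      exact mul_nonneg
        (mul_nonneg (mul_nonneg (inv_nonneg.mpr hc.le) (Real.rpow_nonneg ht0.le _))
          (Real.rpow_nonneg h1 _))
        (mul_nonneg (mul_nonneg (Real.rpow_nonneg hu.1.le _) (Real.rpow_nonneg h2 _))
          (Real.rpow_nonneg h3 _))
    have e2 : ∫⁻ u in Ioo 0 m, ENNReal.ofReal (G (u, s))
        = ENNReal.ofReal (∫ u in Ioo 0 m, G (u, s)) :=
      (MeasureTheory.ofReal_integral_eq_lintegral_ofReal hInt hnn).symm
    have e3 : ∫ u in Ioo 0 m, G (u, s)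
        = (c⁻¹ * t ^ a * (T - s) ^ (-a))
          * ∫ u in (0:ℝ)..m, u ^ (-(2*a)) * (t - u) ^ (a-1) * (s - u) ^ (a-1) := by
      rw [intervalIntegral.integral_of_le hm0.le, MeasureTheory.integral_Ioc_eq_integral_Ioo,
        ← MeasureTheory.integral_const_mul]
    have e4 : ∫ u in (0:ℝ)..m, u ^ (-(2*a)) * (t - u) ^ (a-1) * (s - u) ^ (a-1)
        = c * (|t - s| ^ (2*a-1) * (t * s) ^ (-a)) := by
      rcases lt_or_gt_of_ne hst with h | h
      · rw [hmdef, min_eq_left h.le, lemD ha0 ha1 hs.1 h,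
          abs_of_pos (by linarith : (0:ℝ) < t - s), hcdef]
      · have hsw : ∫ u in (0:ℝ)..t, u ^ (-(2*a)) * (t - u) ^ (a-1) * (s - u) ^ (a-1)
            = ∫ u in (0:ℝ)..t, u ^ (-(2*a)) * (s - u) ^ (a-1) * (t - u) ^ (a-1) :=
          intervalIntegral.integral_congr (fun u _ => by ring)
        rw [hmdef, min_eq_right h.le, hsw, lemD ha0 ha1 ht0 h,
          abs_of_neg (by linarith : t - s < 0), show -(t-s) = s - t by ring,
          show s * t = t * s by ring, hcdef]
    have e5 : (c⁻¹ * t ^ a * (T - s) ^ (-a)) * (c * (|t - s| ^ (2*a-1) * (t * s) ^ (-a)))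
        = F s := by
      rw [Real.mul_rpow ht0.le hs.1.le,
        show (c⁻¹ * t ^ a * (T - s) ^ (-a)) * (c * (|t - s| ^ (2*a-1) * (t ^ (-a) * s ^ (-a))))
          = (c⁻¹ * c) * ((t ^ a * t ^ (-a)) * (|t - s| ^ (2*a-1) * s ^ (-a) * (T - s) ^ (-a)))
          by ring,
        inv_mul_cancel₀ hc.ne', ← Real.rpow_add ht0, show a + -a = (0:ℝ) by ring,
        Real.rpow_zero, one_mul, one_mul]
    rw [e1, e2, e3, e4, e5]
  -- reduce to the lintegral
  have hFnn : 0 ≤ᵐ[volume.restrict (Ioo (0:ℝ) T)] F := by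
    filter_upwards [MeasureTheory.ae_restrict_mem measurableSet_Ioo] with s hs
    rw [hFdef]
    exact mul_nonneg (mul_nonneg (Real.rpow_nonneg (abs_nonneg _) _)
      (Real.rpow_nonneg hs.1.le _)) (Real.rpow_nonneg (by linarith [hs.2] : (0:ℝ) ≤ T - s) _)
  have hFmeas : AEStronglyMeasurable F (volume.restrict (Ioo (0:ℝ) T)) := by
    rw [hFdef]
    apply Measurable.aestronglyMeasurable
    exact (((measurable_const.sub measurable_id).abs.pow_const _).mul
      (measurable_id.pow_const _)).mul ((measurable_const.sub measurable_id).pow_const _)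
  have hne_t : ∀ᵐ s : ℝ ∂volume, s ≠ t := by
    rw [ae_iff]
    simp only [not_not, Set.setOf_eq_eq_singleton]
    exact Real.volume_singleton
  -- Step A : rewrite via fact1
  have stepA : ∫⁻ s in Ioo (0:ℝ) T, ENNReal.ofReal (F s) = ∫⁻ s in Ioo (0:ℝ) T, ∫⁻ u, g (u, s) := by
    apply lintegral_congr_ae
    filter_upwards [MeasureTheory.ae_restrict_mem measurableSet_Ioo,
      MeasureTheory.ae_restrict_of_ae hne_t] with s hs hst
    exact fact1 s hs hst
  -- Step B : extend to full line
  have stepB : ∫⁻ s in Ioo (0:ℝ) T, ∫⁻ u, g (u, s) = ∫⁻ s, ∫⁻ u, g (u, s) := by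
    rw [← MeasureTheory.lintegral_indicator measurableSet_Ioo]
    apply lintegral_congr
    intro s
    by_cases hs : s ∈ Ioo (0:ℝ) T
    · rw [Set.indicator_of_mem hs]
    · rw [Set.indicator_of_notMem hs]
      have hz : ∀ u, g (u, s) = 0 := by
        intro u
        apply Set.indicator_of_notMem
        rintro ⟨h1, h2, h3, _⟩
        exact hs ⟨h1.trans h2, h3⟩
      simp [hz]
  -- Step C : Tonelli swap
  have stepC : ∫⁻ s, ∫⁻ u, g (u, s) = ∫⁻ u, ∫⁻ s, g (u, s) := by
    exact MeasureTheory.lintegral_lintegral_swap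
      ((hgmeas.comp measurable_swap).aemeasurable)
  -- Step D : inner slices in s
  set K2 : ℝ → ℝ := fun u => (c⁻¹ * t ^ a * (u ^ (-(2*a)) * (t - u) ^ (a-1))) * Ba with hK2def
  have stepD : ∀ u, ∫⁻ s, g (u, s) = (Ioo 0 t).indicator (fun u => ENNReal.ofReal (K2 u)) u := by
    intro u
    by_cases hu : u ∈ Ioo (0:ℝ) t
    · rw [Set.indicator_of_mem hu]
      have huT : u < T := hu.2.trans htT
      have hslice2 : ∀ s, g (u, s)
          = (Ioo u T).indicator (fun s => ENNReal.ofReal (G (u, s))) s := by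
        intro s
        show R.indicator (fun p => ENNReal.ofReal (G p)) (u, s)
          = (Ioo u T).indicator (fun s => ENNReal.ofReal (G (u, s))) s
        by_cases hsm : s ∈ Ioo u T
        · rw [Set.indicator_of_mem hsm, Set.indicator_of_mem]
          exact ⟨hu.1, hsm.1, hsm.2, hu.2⟩
        · rw [Set.indicator_of_notMem hsm, Set.indicator_of_notMem]
          rintro ⟨_, h2, h3, _⟩
          exact hsm ⟨h2, h3⟩
      have hGW : ∀ s : ℝ, G (u, s)
          = (c⁻¹ * t ^ a * (u ^ (-(2*a)) * (t - u) ^ (a-1)))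
            * ((s - u) ^ (a-1) * (T - s) ^ ((1-a)-1)) := by
        intro s
        rw [hGdef, show ((1-a)-1 : ℝ) = -a by ring]
        ring
      have hInt2 : IntegrableOn (fun s => G (u, s)) (Ioo u T) volume := by
        have hb := (integrableOn_betaType2 (by linarith : (-1:ℝ) < a - 1)
          (by linarith : (-1:ℝ) < (1-a)-1) huT).const_mul
          (c⁻¹ * t ^ a * (u ^ (-(2*a)) * (t - u) ^ (a-1)))
        exact MeasureTheory.IntegrableOn.congr_fun hb (fun s _ => (hGW s).symm)
          measurableSet_Ioo
      have hnn2 : 0 ≤ᵐ[volume.restrict (Ioo u T)] fun s => G (u, s) := by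
        filter_upwards [MeasureTheory.ae_restrict_mem measurableSet_Ioo] with s hsm
        rw [hGdef]
        exact mul_nonneg
          (mul_nonneg (mul_nonneg (inv_nonneg.mpr hc.le) (Real.rpow_nonneg ht0.le _))
            (Real.rpow_nonneg (by linarith [hsm.2] : (0:ℝ) ≤ T - s) _))
          (mul_nonneg (mul_nonneg (Real.rpow_nonneg hu.1.le _)
            (Real.rpow_nonneg (by linarith [hu.2] : (0:ℝ) ≤ t - u) _))
            (Real.rpow_nonneg (by linarith [hsm.1] : (0:ℝ) ≤ s - u) _))
      have d1 : ∫⁻ s, g (u, s) = ∫⁻ s in Ioo u T, ENNReal.ofReal (G (u, s)) := by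
        rw [← MeasureTheory.lintegral_indicator measurableSet_Ioo]
        exact lintegral_congr hslice2
      have d2 : ∫⁻ s in Ioo u T, ENNReal.ofReal (G (u, s))
          = ENNReal.ofReal (∫ s in Ioo u T, G (u, s)) :=
        (MeasureTheory.ofReal_integral_eq_lintegral_ofReal hInt2 hnn2).symm
      have d3 : ∫ s in Ioo u T, G (u, s) = K2 u := by
        have d3a : ∫ s in Ioo u T, G (u, s)
            = (c⁻¹ * t ^ a * (u ^ (-(2*a)) * (t - u) ^ (a-1)))
              * ∫ s in u..T, (s - u) ^ (a-1) * (T - s) ^ ((1-a)-1) := by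
          rw [intervalIntegral.integral_of_le huT.le,
            MeasureTheory.integral_Ioc_eq_integral_Ioo, ← MeasureTheory.integral_const_mul]
          exact MeasureTheory.setIntegral_congr_fun measurableSet_Ioo (fun s _ => hGW s)
        rw [d3a, show (a-1 : ℝ) = a - 1 by ring,
          integral_beta_shift ha0 (by linarith : (0:ℝ) < 1 - a) huT,
          show (a + (1-a) - 1 : ℝ) = 0 by ring, Real.rpow_zero, one_mul, hK2def, hBadef]
      rw [d1, d2, d3]
    · rw [Set.indicator_of_notMem hu]
      have hz : ∀ s, g (u, s) = 0 := by
        intro s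
        apply Set.indicator_of_notMem
        rintro ⟨h1, _, _, h4⟩
        exact hu ⟨h1, h4⟩
      simp [hz]
  -- Step E : final evaluation
  have hIntK2 : IntegrableOn K2 (Ioo 0 t) volume := by
    have hb := (integrableOn_betaType2 (by linarith : (-1:ℝ) < -(2*a))
      (by linarith : (-1:ℝ) < a - 1) ht0).const_mul ((c⁻¹ * t ^ a) * Ba)
    refine MeasureTheory.IntegrableOn.congr_fun hb (fun u _ => ?_) measurableSet_Ioo
    rw [hK2def, sub_zero]
    ring
  have hnnK2 : 0 ≤ᵐ[volume.restrict (Ioo (0:ℝ) t)] K2 := by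
    filter_upwards [MeasureTheory.ae_restrict_mem measurableSet_Ioo] with u hu
    rw [hK2def]
    exact mul_nonneg
      (mul_nonneg (mul_nonneg (inv_nonneg.mpr hc.le) (Real.rpow_nonneg ht0.le _))
        (mul_nonneg (Real.rpow_nonneg hu.1.le _)
          (Real.rpow_nonneg (by linarith [hu.2] : (0:ℝ) ≤ t - u) _))) hBa.le
  have stepE : ∫⁻ u, ∫⁻ s, g (u, s) = ENNReal.ofReal Ba := by
    calc ∫⁻ u, ∫⁻ s, g (u, s)
        = ∫⁻ u, (Ioo 0 t).indicator (fun u => ENNReal.ofReal (K2 u)) u :=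
          lintegral_congr stepD
      _ = ∫⁻ u in Ioo (0:ℝ) t, ENNReal.ofReal (K2 u) :=
          MeasureTheory.lintegral_indicator measurableSet_Ioo _
      _ = ENNReal.ofReal (∫ u in Ioo (0:ℝ) t, K2 u) :=
          (MeasureTheory.ofReal_integral_eq_lintegral_ofReal hIntK2 hnnK2).symm
      _ = ENNReal.ofReal Ba := by
          have eK : ∫ u in Ioo (0:ℝ) t, K2 u
              = ((c⁻¹ * t ^ a) * Ba) * ∫ u in (0:ℝ)..t, (u - 0) ^ ((1-2*a)-1) * (t - u) ^ (a-1) := by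
            rw [intervalIntegral.integral_of_le ht0.le,
              MeasureTheory.integral_Ioc_eq_integral_Ioo, ← MeasureTheory.integral_const_mul]
            refine MeasureTheory.setIntegral_congr_fun measurableSet_Ioo (fun u _ => ?_)
            rw [hK2def, sub_zero, show ((1-2*a)-1 : ℝ) = -(2*a) by ring]
            ring
          rw [eK, integral_beta_shift (by linarith : (0:ℝ) < 1 - 2*a) ha0 ht0, sub_zero,
            show ((1-2*a) + a - 1 : ℝ) = -a by ring, ← hcdef,
            show c⁻¹ * t ^ a * Ba * (t ^ (-a) * c)
              = (c⁻¹ * c) * ((t ^ a * t ^ (-a)) * Ba) by ring,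
            inv_mul_cancel₀ hc.ne', ← Real.rpow_add ht0, show a + -a = (0:ℝ) by ring,
            Real.rpow_zero, one_mul, one_mul]
  -- assemble
  have final : ∫⁻ s in Ioo (0:ℝ) T, ENNReal.ofReal (F s) = ENNReal.ofReal Ba := by
    rw [stepA, stepB, stepC, stepE]
  have hIoo : ∫ s in (0:ℝ)..T, F s = ∫ s in Ioo (0:ℝ) T, F s := by
    rw [intervalIntegral.integral_of_le hT0.le, MeasureTheory.integral_Ioc_eq_integral_Ioo]
  calc ∫ s in (0:ℝ)..T, F s = ∫ s in Ioo (0:ℝ) T, F s := hIoo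
    _ = (∫⁻ s in Ioo (0:ℝ) T, ENNReal.ofReal (F s)).toReal :=
        MeasureTheory.integral_eq_lintegral_of_nonneg_ae hFnn hFmeas
    _ = Ba := by rw [final, ENNReal.toReal_ofReal hBa.le]

/-- For fractional Brownian motion with Hurst index `H ∈ (1/2,1)`, the function
`h_T(s) = C_H s^{1/2−H}(T−s)^{1/2−H}` lies in `L²[0,T]` and solves
`∫₀ᵀ H(2H−1)|t−s|^{2H−2} h_T(s) ds = 1` for all `t ∈ (0,T)`. -/
theorem fbm_kernel_equation_solution
    (H T : ℝ) (hH : H ∈ Set.Ioo (1 / 2 : ℝ) 1) (hT : 0 < T)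
    (C : ℝ) (hC : C = (H * (2 * H - 1) * eulerBeta (H - 1 / 2) (3 / 2 - H))⁻¹)
    (hfun : ℝ → ℝ)
    (hhfun : ∀ s : ℝ, hfun s = C * s ^ ((1 : ℝ) / 2 - H) * (T - s) ^ ((1 : ℝ) / 2 - H)) :
    MemLp hfun 2 (volume.restrict (Set.Icc 0 T)) ∧
      ∀ t ∈ Set.Ioo (0 : ℝ) T,
        ∫ s in (0 : ℝ)..T, H * (2 * H - 1) * |t - s| ^ (2 * H - 2) * hfun s = 1 := by
  obtain ⟨hH1, hH2⟩ := hH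
  have ha0 : (0:ℝ) < H - 1/2 := by linarith
  have ha1 : H - 1/2 < 1/2 := by linarith
  constructor
  · -- L² membership
    have hfeq : hfun = fun s => C * s ^ ((1:ℝ)/2 - H) * (T - s) ^ ((1:ℝ)/2 - H) :=
      funext hhfun
    have hmeas : AEStronglyMeasurable hfun (volume.restrict (Set.Icc 0 T)) := by
      rw [hfeq]
      exact ((measurable_const.mul (measurable_id.pow_const _)).mul
        ((measurable_const.sub measurable_id).pow_const _)).aestronglyMeasurable
    rw [MeasureTheory.memLp_two_iff_integrable_sq hmeas]
    have hres : volume.restrict (Set.Icc (0:ℝ) T) = volume.restrict (Set.Ioo (0:ℝ) T) :=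
      (MeasureTheory.Measure.restrict_congr_set Ioo_ae_eq_Icc).symm
    rw [hres]
    have hb := (integrableOn_betaType2 (show (-1:ℝ) < 1 - 2*H by linarith)
      (show (-1:ℝ) < 1 - 2*H by linarith) hT).const_mul (C*C)
    apply MeasureTheory.Integrable.congr hb
    filter_upwards [MeasureTheory.ae_restrict_mem measurableSet_Ioo] with s hs
    have h1 : (0:ℝ) < s := hs.1
    have h2 : (0:ℝ) < T - s := by linarith [hs.2]
    rw [hhfun s, sub_zero,
      show (1 - 2*H : ℝ) = ((1:ℝ)/2 - H) + ((1:ℝ)/2 - H) by ring,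
      Real.rpow_add h1, Real.rpow_add h2]
    ring
  · intro t ht
    have key := main_integral ha0 ha1 ht.1 ht.2
    have hpt : ∀ s : ℝ, H * (2 * H - 1) * |t - s| ^ (2 * H - 2) * hfun s
        = (H * (2 * H - 1) * C) * (|t - s| ^ (2*(H - 1/2) - 1) * s ^ (-(H - 1/2))
            * (T - s) ^ (-(H - 1/2))) := by
      intro s
      rw [hhfun s, show (2*H - 2 : ℝ) = 2*(H - 1/2) - 1 by ring,
        show ((1:ℝ)/2 - H) = -(H - 1/2) by ring]
      ring
    calc ∫ s in (0:ℝ)..T, H * (2 * H - 1) * |t - s| ^ (2 * H - 2) * hfun s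
        = ∫ s in (0:ℝ)..T, (H * (2 * H - 1) * C) * (|t - s| ^ (2*(H - 1/2) - 1)
            * s ^ (-(H - 1/2)) * (T - s) ^ (-(H - 1/2))) :=
          intervalIntegral.integral_congr (fun s _ => hpt s)
      _ = (H * (2 * H - 1) * C) * eulerBeta (H - 1/2) (1 - (H - 1/2)) := by
          rw [intervalIntegral.integral_const_mul, key]
      _ = 1 := by
          rw [hC, show (1 - (H - 1/2) : ℝ) = 3/2 - H by ring]
          have hB := eulerBeta_pos (show (0:ℝ) < H - 1/2 by linarith)
            (show (0:ℝ) < 3/2 - H by linarith)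
          have hX : H * (2 * H - 1) * eulerBeta (H - 1/2) (3/2 - H) ≠ 0 :=
            ne_of_gt (mul_pos (mul_pos (by linarith) (by linarith)) hB)
          rw [show H * (2 * H - 1) * (H * (2 * H - 1) * eulerBeta (H - 1/2) (3/2 - H))⁻¹
              * eulerBeta (H - 1/2) (3/2 - H)
            = (H * (2 * H - 1) * eulerBeta (H - 1/2) (3/2 - H))⁻¹
              * (H * (2 * H - 1) * eulerBeta (H - 1/2) (3/2 - H)) by ring]
          exact inv_mul_cancel₀ hX
end

section
/- Let T > 0, let K : ℝ → ℝ be an even function integrable on [-T, T], and let Γ_T be the operator on L²[0, T] given by (Γ_T f)(t) = ∫₀ᵀ K(t - s) f(s) ds. Assume Γ_T is positive semi-definite (∫₀ᵀ (Γ_T f)(t) f(t) dt ≥ 0 for all f ∈ L²[0, T]) and that h ∈ L²[0, T] satisfies Γ_T h = 1 almost everywhere on [0, T]. Let 0 = t_0 < t_1 < ... < t_N ≤ T be a partition, let Γ^{(N)} be the N×N matrix with entries Γ^{(N)}_{k,l} = ∫_{t_{k-1}}^{t_k} ∫_{t_{l-1}}^{t_l} K(t - s) ds dt, assumed positive definite,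 and let z = (t_k - t_{k-1})_{k=1}^N. Then ∫₀ᵀ h(t) dt ≥ zᵀ (Γ^{(N)})⁻¹ z. -/
open Matrix MeasureTheory

lemma CVD.prod_int1 {T : ℝ} {K f : ℝ → ℝ} (hKm : Measurable K)
    (hKint : Integrable K (volume : Measure ℝ)) (hfm : Measurable f)
    (hf : Integrable f ((volume : Measure ℝ).restrict (Set.Icc 0 T))) :
    Integrable (fun p : ℝ × ℝ => K (p.1 - p.2) * f p.1)
      (((volume : Measure ℝ).restrict (Set.Icc 0 T)).prod
        ((volume : Measure ℝ).restrict (Set.Icc 0 T))) := by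
  have hmeas : Measurable fun p : ℝ × ℝ => K (p.1 - p.2) * f p.1 :=
    (hKm.comp (measurable_fst.sub measurable_snd)).mul (hfm.comp measurable_fst)
  refine (integrable_prod_iff hmeas.aestronglyMeasurable).2 ⟨?_, ?_⟩
  · exact Filter.Eventually.of_forall fun x =>
      ((hKint.comp_sub_left x).restrict).mul_const (f x)
  · have hsm : StronglyMeasurable fun x =>
        ∫ y, ‖K (x - y) * f x‖ ∂((volume : Measure ℝ).restrict (Set.Icc 0 T)) := by
      apply StronglyMeasurable.integral_prod_right
        (f := fun x y => ‖K (x - y) * f x‖)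
      exact hmeas.norm.stronglyMeasurable
    refine Integrable.mono' (g := fun x => (∫ u, ‖K u‖) * ‖f x‖)
      (hf.norm.const_mul _) hsm.aestronglyMeasurable
      (Filter.Eventually.of_forall fun x => ?_)
    rw [Real.norm_of_nonneg (integral_nonneg fun y => norm_nonneg _)]
    have h1 : ∫ y, ‖K (x - y) * f x‖ ∂((volume : Measure ℝ).restrict (Set.Icc 0 T))
        = (∫ y, ‖K (x - y)‖ ∂((volume : Measure ℝ).restrict (Set.Icc 0 T))) * ‖f x‖ := by
      simp_rw [norm_mul]; exact integral_mul_const _ _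
    rw [h1]
    have h2 : ∫ y, ‖K (x - y)‖ ∂((volume : Measure ℝ).restrict (Set.Icc 0 T))
        ≤ ∫ y, ‖K (x - y)‖ :=
      setIntegral_le_integral (hKint.comp_sub_left x).norm
        (Filter.Eventually.of_forall fun y => norm_nonneg _)
    have h3 : ∫ y, ‖K (x - y)‖ ∂(volume : Measure ℝ) = ∫ u, ‖K u‖ :=
      integral_sub_left_eq_self (fun u => ‖K u‖) volume x
    exact mul_le_mul_of_nonneg_right (h2.trans h3.le) (norm_nonneg _)


lemma CVD.aux
    (T : ℝ) (hT : 0 < T) (K : ℝ → ℝ)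
    (hKeven : ∀ t : ℝ, K (-t) = K t)
    (hKm : Measurable K) (hKint : Integrable K (volume : Measure ℝ))
    (hpos : ∀ f : ℝ → ℝ, MemLp f 2 (volume.restrict (Set.Icc 0 T)) →
      0 ≤ ∫ t in Set.Icc (0 : ℝ) T,
            (∫ s in Set.Icc (0 : ℝ) T, K (t - s) * f s) * f t)
    (h : ℝ → ℝ) (hhm : StronglyMeasurable h)
    (hh : MemLp h 2 (volume.restrict (Set.Icc 0 T)))
    (hΓh : ∀ᵐ t ∂(volume.restrict (Set.Icc (0 : ℝ) T)),
      ∫ s in Set.Icc (0 : ℝ) T, K (t - s) * h s = 1)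
    (N : ℕ)
    (t : Fin (N + 1) → ℝ) (ht0 : t 0 = 0) (htmono : StrictMono t)
    (htT : t (Fin.last N) ≤ T)
    (Γ : Matrix (Fin N) (Fin N) ℝ)
    (hΓdef : ∀ k l : Fin N,
      Γ k l = ∫ u in (t k.castSucc)..(t k.succ),
          ∫ s in (t l.castSucc)..(t l.succ), K (u - s))
    (hΓpos : Γ.PosDef)
    (z : Fin N → ℝ) (hz : ∀ k : Fin N, z k = t k.succ - t k.castSucc) :
    z ⬝ᵥ Γ⁻¹ *ᵥ z ≤ ∫ s in Set.Icc (0 : ℝ) T, h s := by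
  classical
  set I : Set ℝ := Set.Icc (0 : ℝ) T with hI
  set μ : Measure ℝ := volume.restrict I with hμ
  have htm : Monotone t := htmono.monotone
  have hkk : ∀ k : Fin N, t k.castSucc ≤ t k.succ :=
    fun k => (htmono (Fin.castSucc_lt_succ (i := k))).le
  have hIk : ∀ k : Fin N, Set.Ioc (t k.castSucc) (t k.succ) ⊆ I := by
    intro k x hx
    refine ⟨?_, hx.2.trans ((htm (Fin.le_last _)).trans htT)⟩
    have h0 : (0 : ℝ) ≤ t k.castSucc := ht0 ▸ htm (Fin.zero_le _)
    exact h0.trans hx.1.le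
  set c : Fin N → ℝ := Γ⁻¹ *ᵥ z with hc
  set g : ℝ → ℝ := fun s =>
    ∑ k : Fin N, Set.indicator (Set.Ioc (t k.castSucc) (t k.succ)) (fun _ => c k) s with hg
  have hgm : Measurable g :=
    Finset.measurable_sum _ fun k _ => measurable_const.indicator measurableSet_Ioc
  set C : ℝ := ∑ k : Fin N, |c k| with hCdef
  have hgb : ∀ s, ‖g s‖ ≤ C := by
    intro s
    rw [Real.norm_eq_abs]
    refine (Finset.abs_sum_le_sum_abs _ _).trans (Finset.sum_le_sum fun k _ => ?_)
    rw [Set.indicator_apply]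
    split_ifs <;> simp
  haveI : IsFiniteMeasure μ := by rw [hμ, hI]; infer_instance
  have hgℒp : MemLp g 2 μ :=
    memLp_finset_sum _ fun k _ =>
      memLp_indicator_const 2 measurableSet_Ioc _ (Or.inr (measure_ne_top μ _))
  have hgi : Integrable g μ := hgℒp.integrable one_le_two
  have hhi : Integrable h μ := hh.integrable one_le_two
  have hKx : ∀ x : ℝ, Integrable (fun y => K (x - y)) μ :=
    fun x => (hKint.comp_sub_left x).restrict
  have hKg : ∀ x : ℝ, Integrable (fun y => K (x - y) * g y) μ := by
    intro x
    exact ((hKx x).bdd_mul hgm.aestronglyMeasurable (Filter.Eventually.of_forall hgb)).congr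
      (Filter.Eventually.of_forall fun y => mul_comm _ _)
  set L : ℝ := ∫ u, ‖K u‖ with hL
  set W : ℝ → ℝ := fun x => ∫ y, K (x - y) * g y ∂μ with hWdef
  have hWm : StronglyMeasurable W := by
    apply StronglyMeasurable.integral_prod_right (f := fun x y => K (x - y) * g y)
    exact ((hKm.comp (measurable_fst.sub measurable_snd)).mul
      (hgm.comp measurable_snd)).stronglyMeasurable
  have hWb : ∀ x, ‖W x‖ ≤ C * L := by
    intro x
    calc ‖W x‖ ≤ ∫ y, ‖K (x - y) * g y‖ ∂μ := norm_integral_le_integral_norm _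
      _ ≤ ∫ y, ‖K (x - y)‖ * C ∂μ := by
          refine integral_mono_of_nonneg (Filter.Eventually.of_forall fun y => norm_nonneg _)
            ((hKx x).norm.mul_const C) (Filter.Eventually.of_forall fun y => ?_)
          show ‖K (x - y) * g y‖ ≤ ‖K (x - y)‖ * C
          rw [norm_mul]
          exact mul_le_mul_of_nonneg_left (hgb y) (norm_nonneg _)
      _ = (∫ y, ‖K (x - y)‖ ∂μ) * C := integral_mul_const _ _
      _ ≤ L * C := by
          refine mul_le_mul_of_nonneg_right ?_ ?_
          · refine (setIntegral_le_integral (hKint.comp_sub_left x).norm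
              (Filter.Eventually.of_forall fun y => norm_nonneg _)).trans ?_
            exact (integral_sub_left_eq_self (fun u => ‖K u‖) volume x).le
          · rw [hCdef]; positivity
      _ = C * L := mul_comm _ _
  have hμIoc : ∀ k : Fin N, μ (Set.Ioc (t k.castSucc) (t k.succ))
      = ENNReal.ofReal (t k.succ - t k.castSucc) := by
    intro k
    rw [hμ, Measure.restrict_apply measurableSet_Ioc,
      Set.inter_eq_self_of_subset_left (hIk k), Real.volume_Ioc]
  have hintg : ∫ x, g x ∂μ = c ⬝ᵥ z := by
    have e : ∫ x, g x ∂μ = ∑ k : Fin N,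
        ((μ (Set.Ioc (t k.castSucc) (t k.succ))).toReal • c k) := by
      simp only [hg]
      rw [integral_finset_sum _ fun k _ =>
        (memLp_indicator_const 1 measurableSet_Ioc (c k)
          (Or.inr (measure_ne_top μ _))).integrable le_rfl]
      exact Finset.sum_congr rfl fun k _ => integral_indicator_const (c k) measurableSet_Ioc
    rw [e]
    simp only [dotProduct]
    refine Finset.sum_congr rfl fun k _ => ?_
    rw [hμIoc k, ENNReal.toReal_ofReal (sub_nonneg.2 (hkk k)), hz k, smul_eq_mul, mul_comm]
  -- expansion of W as finite sum
  have hWeq : ∀ x : ℝ, W x = ∑ l : Fin N,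
      (∫ y in Set.Ioc (t l.castSucc) (t l.succ), K (x - y)) * c l := by
    intro x
    show (∫ y, K (x - y) * g y ∂μ) = _
    have h1 : (fun y => K (x - y) * g y) = fun y =>
        ∑ l : Fin N, Set.indicator (Set.Ioc (t l.castSucc) (t l.succ))
          (fun y => K (x - y) * c l) y := by
      funext y
      simp only [hg, Finset.mul_sum]
      refine Finset.sum_congr rfl fun l _ => ?_
      rw [Set.indicator_apply, Set.indicator_apply]
      split_ifs <;> simp
    rw [h1, integral_finset_sum]
    · refine Finset.sum_congr rfl fun l _ => ?_
      rw [integral_indicator measurableSet_Ioc, hμ,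
        Measure.restrict_restrict measurableSet_Ioc,
        Set.inter_eq_self_of_subset_left (hIk l), integral_mul_const]
    · intro l _
      rw [integrable_indicator_iff measurableSet_Ioc]
      exact ((hKx x).mul_const (c l)).restrict
  -- Fubini: ∫ W·h
  have hP1 : Integrable (fun p : ℝ × ℝ => K (p.1 - p.2) * h p.1) (μ.prod μ) := by
    rw [hμ, hI]; rw [hμ, hI] at hhi
    exact CVD.prod_int1 hKm hKint hhm.measurable hhi
  have hP3 : Integrable (fun p : ℝ × ℝ => K (p.1 - p.2) * g p.2 * h p.1) (μ.prod μ) := by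
    have hmeas : Measurable fun p : ℝ × ℝ => K (p.1 - p.2) * g p.2 * h p.1 :=
      ((hKm.comp (measurable_fst.sub measurable_snd)).mul (hgm.comp measurable_snd)).mul
        (hhm.measurable.comp measurable_fst)
    refine Integrable.mono' (hP1.norm.const_mul C) hmeas.aestronglyMeasurable
      (Filter.Eventually.of_forall fun p => ?_)
    have e : ‖K (p.1 - p.2) * g p.2 * h p.1‖ = ‖g p.2‖ * ‖K (p.1 - p.2) * h p.1‖ := by
      rw [norm_mul, norm_mul, norm_mul]; ring
    rw [e]
    exact mul_le_mul_of_nonneg_right (hgb _) (norm_nonneg _)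
  have hWh : ∫ x, W x * h x ∂μ = c ⬝ᵥ z := by
    have e1 : ∫ x, W x * h x ∂μ = ∫ x, ∫ y, K (x - y) * g y * h x ∂μ ∂μ := by
      refine integral_congr_ae (Filter.Eventually.of_forall fun x => ?_)
      show W x * h x = ∫ y, K (x - y) * g y * h x ∂μ
      rw [hWdef]
      exact (integral_mul_const (h x) fun y => K (x - y) * g y).symm
    have e2 : ∫ x, ∫ y, K (x - y) * g y * h x ∂μ ∂μ
        = ∫ y, ∫ x, K (x - y) * g y * h x ∂μ ∂μ :=
      integral_integral_swap hP3
    have e3 : ∫ y, ∫ x, K (x - y) * g y * h x ∂μ ∂μ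
        = ∫ y, g y * ∫ x, K (y - x) * h x ∂μ ∂μ := by
      refine integral_congr_ae (Filter.Eventually.of_forall fun y => ?_)
      show (∫ x, K (x - y) * g y * h x ∂μ) = g y * ∫ x, K (y - x) * h x ∂μ
      rw [← integral_const_mul]
      refine integral_congr_ae (Filter.Eventually.of_forall fun x => ?_)
      show K (x - y) * g y * h x = g y * (K (y - x) * h x)
      rw [show K (x - y) = K (y - x) by rw [← hKeven (y - x), neg_sub]]
      ring
    have e4 : ∫ y, g y * ∫ x, K (y - x) * h x ∂μ ∂μ = ∫ y, g y ∂μ := by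
      refine integral_congr_ae ?_
      filter_upwards [hΓh] with y hy
      rw [hy, mul_one]
    rw [e1, e2, e3, e4, hintg]
  -- the matrix term
  have hΓc : Γ *ᵥ c = z := by
    rw [hc, Matrix.mulVec_mulVec,
      Matrix.mul_nonsing_inv _ (isUnit_iff_ne_zero.2 hΓpos.det_pos.ne'), Matrix.one_mulVec]
  have hΓ' : ∀ k l : Fin N, Γ k l = ∫ u in Set.Ioc (t k.castSucc) (t k.succ),
      ∫ s in Set.Ioc (t l.castSucc) (t l.succ), K (u - s) := by
    intro k l
    rw [hΓdef k l, intervalIntegral.integral_of_le (hkk k)]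
    refine integral_congr_ae (Filter.Eventually.of_forall fun u => ?_)
    show (∫ s in (t l.castSucc)..(t l.succ), K (u - s)) = _
    rw [intervalIntegral.integral_of_le (hkk l)]
  have hVm : ∀ l : Fin N, StronglyMeasurable fun x =>
      ∫ y in Set.Ioc (t l.castSucc) (t l.succ), K (x - y) := by
    intro l
    apply StronglyMeasurable.integral_prod_right (f := fun x y => K (x - y))
    exact (hKm.comp (measurable_fst.sub measurable_snd)).stronglyMeasurable
  have hVb : ∀ (l : Fin N) (x : ℝ),
      ‖∫ y in Set.Ioc (t l.castSucc) (t l.succ), K (x - y)‖ ≤ L := by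
    intro l x
    refine (norm_integral_le_integral_norm _).trans ?_
    refine (setIntegral_le_integral (hKint.comp_sub_left x).norm
      (Filter.Eventually.of_forall fun y => norm_nonneg _)).trans ?_
    exact (integral_sub_left_eq_self (fun u => ‖K u‖) volume x).le
  have hWint : Integrable W μ :=
    (MemLp.of_bound hWm.aestronglyMeasurable (C * L)
      (Filter.Eventually.of_forall hWb) (p := 1)).integrable le_rfl
  have hWg : ∫ x, W x * g x ∂μ = c ⬝ᵥ z := by
    have e1 : ∫ x, W x * g x ∂μ = ∑ k : Fin N,
        (∫ x in Set.Ioc (t k.castSucc) (t k.succ), W x) * c k := by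
      have h1 : (fun x => W x * g x) = fun x =>
          ∑ k : Fin N, Set.indicator (Set.Ioc (t k.castSucc) (t k.succ))
            (fun x => W x * c k) x := by
        funext x
        simp only [hg, Finset.mul_sum]
        refine Finset.sum_congr rfl fun k _ => ?_
        rw [Set.indicator_apply, Set.indicator_apply]
        split_ifs <;> simp
      rw [h1, integral_finset_sum]
      · refine Finset.sum_congr rfl fun k _ => ?_
        rw [integral_indicator measurableSet_Ioc, hμ,
          Measure.restrict_restrict measurableSet_Ioc,
          Set.inter_eq_self_of_subset_left (hIk k), integral_mul_const]
      · intro k _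
        rw [integrable_indicator_iff measurableSet_Ioc]
        exact (hWint.mul_const (c k)).restrict
    have e2 : ∀ k : Fin N, (∫ x in Set.Ioc (t k.castSucc) (t k.succ), W x)
        = ∑ l : Fin N, Γ k l * c l := by
      intro k
      rw [integral_congr_ae (Filter.Eventually.of_forall fun x => hWeq x)]
      rw [integral_finset_sum]
      · exact Finset.sum_congr rfl fun l _ => by rw [integral_mul_const, hΓ' k l]
      · intro l _
        refine (MemLp.of_bound ((hVm l).aestronglyMeasurable.restrict) L
          (Filter.Eventually.of_forall (hVb l)) (p := 1)).integrable le_rfl |>.mul_const _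
    calc ∫ x, W x * g x ∂μ = ∑ k : Fin N, (∑ l : Fin N, Γ k l * c l) * c k := by
          rw [e1]; exact Finset.sum_congr rfl fun k _ => by rw [e2 k]
      _ = (Γ *ᵥ c) ⬝ᵥ c := by
          simp only [dotProduct, Matrix.mulVec, dotProduct]
      _ = z ⬝ᵥ c := by rw [hΓc]
      _ = c ⬝ᵥ z := dotProduct_comm _ _
  -- positivity and conclusion
  have hfℒp : MemLp (fun s => h s - g s) 2 μ := hh.sub hgℒp
  have hpos0 : 0 ≤ ∫ x, (∫ y, K (x - y) * (h y - g y) ∂μ) * (h x - g x) ∂μ :=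
    hpos _ hfℒp
  have hsliceh : ∀ᵐ x ∂μ, Integrable (fun y => K (x - y) * h y) μ := by
    have h2 : Integrable (fun p : ℝ × ℝ => K (p.1 - p.2) * h p.2) (μ.prod μ) := by
      have heq : (fun p : ℝ × ℝ => K (p.1 - p.2) * h p.1) ∘ Prod.swap
          = fun p : ℝ × ℝ => K (p.1 - p.2) * h p.2 := by
        funext p
        simp only [Function.comp_apply, Prod.fst_swap, Prod.snd_swap]
        rw [show p.2 - p.1 = -(p.1 - p.2) by ring, hKeven]
      rw [← heq]; exact hP1.swap
    exact h2.prod_right_ae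
  have hinner : ∀ᵐ x ∂μ, (∫ y, K (x - y) * (h y - g y) ∂μ) = 1 - W x := by
    filter_upwards [hΓh, hsliceh] with x hx hxi
    have e : (fun y => K (x - y) * (h y - g y))
        = fun y => K (x - y) * h y - K (x - y) * g y := by funext y; ring
    rw [e, integral_sub hxi (hKg x), hx, hWdef]
  have hmain : 0 ≤ ∫ x, (1 - W x) * (h x - g x) ∂μ := by
    refine le_trans hpos0 (le_of_eq (integral_congr_ae ?_))
    filter_upwards [hinner] with x hx
    show (∫ y, K (x - y) * (h y - g y) ∂μ) * (h x - g x) = (1 - W x) * (h x - g x)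
    rw [hx]
  have hWhint : Integrable (fun x => W x * h x) μ :=
    hhi.bdd_mul hWm.aestronglyMeasurable (Filter.Eventually.of_forall hWb)
  have hWgint : Integrable (fun x => W x * g x) μ :=
    hgi.bdd_mul hWm.aestronglyMeasurable (Filter.Eventually.of_forall hWb)
  have hexp : ∫ x, (1 - W x) * (h x - g x) ∂μ
      = ∫ x, h x ∂μ - ∫ x, g x ∂μ - (∫ x, W x * h x ∂μ - ∫ x, W x * g x ∂μ) := by
    have e : (fun x => (1 - W x) * (h x - g x))
        = fun x => (h x - g x) - (W x * h x - W x * g x) := by funext x; ring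
    have hs1 : Integrable (fun x => h x - g x) μ := hhi.sub hgi
    have hs2 : Integrable (fun x => W x * h x - W x * g x) μ := hWhint.sub hWgint
    rw [e, integral_sub hs1 hs2, integral_sub hhi hgi, integral_sub hWhint hWgint]
  rw [hexp, hintg, hWh, hWg] at hmain
  have hzz : z ⬝ᵥ Γ⁻¹ *ᵥ z = c ⬝ᵥ z := by rw [hc]; exact dotProduct_comm _ _
  rw [hzz]
  linarith


/-- Comparison between the continuous-time and discrete-time maximum likelihood
estimators: if `Γ_T` (with even kernel `K ∈ L¹[-T,T]`) is positive semi-definite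
and `Γ_T h = 1` a.e. on `[0,T]`, then for any partition `0 = t₀ < t₁ < … < t_N ≤ T`
with positive definite increment covariance matrix `Γ^{(N)}` one has
`∫₀ᵀ h(t) dt ≥ zᵀ (Γ^{(N)})⁻¹ z`. -/
theorem continuous_vs_discrete_variance_comparison
    (T : ℝ) (hT : 0 < T) (K : ℝ → ℝ)
    (hKeven : ∀ t : ℝ, K (-t) = K t)
    (hK : IntegrableOn K (Set.Icc (-T) T))
    (hpos : ∀ f : ℝ → ℝ, MemLp f 2 (volume.restrict (Set.Icc 0 T)) →
      0 ≤ ∫ t in Set.Icc (0 : ℝ) T,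
            (∫ s in Set.Icc (0 : ℝ) T, K (t - s) * f s) * f t)
    (h : ℝ → ℝ) (hh : MemLp h 2 (volume.restrict (Set.Icc 0 T)))
    (hΓh : ∀ᵐ t ∂(volume.restrict (Set.Icc (0 : ℝ) T)),
      ∫ s in Set.Icc (0 : ℝ) T, K (t - s) * h s = 1)
    (N : ℕ) (hN : 1 ≤ N)
    (t : Fin (N + 1) → ℝ) (ht0 : t 0 = 0) (htmono : StrictMono t)
    (htT : t (Fin.last N) ≤ T)
    (Γ : Matrix (Fin N) (Fin N) ℝ)
    (hΓdef : ∀ k l : Fin N,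
      Γ k l = ∫ u in (t k.castSucc)..(t k.succ),
          ∫ s in (t l.castSucc)..(t l.succ), K (u - s))
    (hΓpos : Γ.PosDef)
    (z : Fin N → ℝ) (hz : ∀ k : Fin N, z k = t k.succ - t k.castSucc) :
    z ⬝ᵥ Γ⁻¹ *ᵥ z ≤ ∫ s in (0 : ℝ)..T, h s := by
  classical
  -- measurable/even modification K'' of K agreeing a.e. with the truncation K₁
  have hK₁asm : AEStronglyMeasurable ((Set.Icc (-T) T).indicator K) (volume : Measure ℝ) :=
    (aestronglyMeasurable_indicator_iff measurableSet_Icc).2 hK.aestronglyMeasurable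
  set K₁ : ℝ → ℝ := (Set.Icc (-T) T).indicator K with hK₁def
  have hK₁even : ∀ u : ℝ, K₁ (-u) = K₁ u := by
    intro u
    have hmem : (-u ∈ Set.Icc (-T) T) ↔ (u ∈ Set.Icc (-T) T) := by
      simp only [Set.mem_Icc]
      constructor <;> (rintro ⟨a, b⟩; constructor <;> linarith)
    by_cases hu : u ∈ Set.Icc (-T) T
    · rw [hK₁def, Set.indicator_of_mem (hmem.2 hu), Set.indicator_of_mem hu, hKeven]
    · rw [hK₁def, Set.indicator_of_notMem (fun hc => hu (hmem.1 hc)),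
        Set.indicator_of_notMem hu]
  set K' : ℝ → ℝ := hK₁asm.mk _ with hK'def
  have hK'm : StronglyMeasurable K' := hK₁asm.stronglyMeasurable_mk
  have hK'eq : K' =ᵐ[volume] K₁ := hK₁asm.ae_eq_mk.symm
  set K'' : ℝ → ℝ := fun u => (K' u + K' (-u)) / 2 with hK''def
  have hK''m : Measurable K'' :=
    (hK'm.measurable.add (hK'm.measurable.comp measurable_neg)).div_const 2
  have hK''even : ∀ u : ℝ, K'' (-u) = K'' u := by
    intro u
    show (K' (-u) + K' (-(-u))) / 2 = (K' u + K' (-u)) / 2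
    rw [neg_neg]; ring
  have hnegeq : (fun u => K' (-u)) =ᵐ[volume] fun u => K₁ (-u) :=
    (Measure.measurePreserving_neg (volume : Measure ℝ)).quasiMeasurePreserving.ae_eq_comp
      hK'eq
  have hK''eq : K'' =ᵐ[volume] K₁ := by
    filter_upwards [hK'eq, hnegeq] with u h1 h2
    show (K' u + K' (-u)) / 2 = K₁ u
    rw [h1, h2, hK₁even u]; ring
  have hK''int : Integrable K'' (volume : Measure ℝ) :=
    ((integrable_indicator_iff measurableSet_Icc).2 hK).congr hK''eq.symm
  have hsubeq : ∀ x : ℝ, (fun y => K'' (x - y)) =ᵐ[volume] fun y => K₁ (x - y) :=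
    fun x => (Measure.measurePreserving_sub_left (volume : Measure ℝ) x
      ).quasiMeasurePreserving.ae_eq_comp hK''eq
  have hpoint : ∀ x ∈ Set.Icc (0 : ℝ) T, ∀ y ∈ Set.Icc (0 : ℝ) T, K₁ (x - y) = K (x - y) := by
    intro x hx y hy
    apply Set.indicator_of_mem
    rw [Set.mem_Icc] at hx hy ⊢
    constructor <;> linarith [hx.1, hx.2, hy.1, hy.2]
  -- measurable modification of h
  set h' : ℝ → ℝ := hh.aestronglyMeasurable.mk _ with hh'def
  have hh'm : StronglyMeasurable h' := hh.aestronglyMeasurable.stronglyMeasurable_mk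
  have hheq : h =ᵐ[volume.restrict (Set.Icc (0 : ℝ) T)] h' := hh.aestronglyMeasurable.ae_eq_mk
  have hh' : MemLp h' 2 (volume.restrict (Set.Icc 0 T)) := hh.ae_eq hheq
  -- transfer of inner integrals
  have hInner : ∀ x ∈ Set.Icc (0 : ℝ) T, ∀ φ ψ : ℝ → ℝ,
      (φ =ᵐ[volume.restrict (Set.Icc (0 : ℝ) T)] ψ) →
      (∫ y in Set.Icc (0 : ℝ) T, K (x - y) * φ y)
        = ∫ y in Set.Icc (0 : ℝ) T, K'' (x - y) * ψ y := by
    intro x hx φ ψ hφψ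
    refine integral_congr_ae ?_
    have h1 : ∀ᵐ y ∂(volume.restrict (Set.Icc (0 : ℝ) T)), K'' (x - y) = K₁ (x - y) :=
      ae_restrict_of_ae (hsubeq x)
    filter_upwards [h1, hφψ, ae_restrict_mem measurableSet_Icc] with y h1y h2y hyI
    show K (x - y) * φ y = K'' (x - y) * ψ y
    rw [h1y, hpoint x hx y hyI, h2y]
  -- transferred hypotheses
  have hpos'' : ∀ f : ℝ → ℝ, MemLp f 2 (volume.restrict (Set.Icc 0 T)) →
      0 ≤ ∫ x in Set.Icc (0 : ℝ) T,
            (∫ y in Set.Icc (0 : ℝ) T, K'' (x - y) * f y) * f x := by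
    intro f hf
    refine (hpos f hf).trans (le_of_eq (integral_congr_ae ?_))
    filter_upwards [ae_restrict_mem measurableSet_Icc] with x hx
    show (∫ y in Set.Icc (0 : ℝ) T, K (x - y) * f y) * f x
        = (∫ y in Set.Icc (0 : ℝ) T, K'' (x - y) * f y) * f x
    rw [hInner x hx f f (Filter.EventuallyEq.refl _ _)]
  have hΓh'' : ∀ᵐ x ∂(volume.restrict (Set.Icc (0 : ℝ) T)),
      ∫ y in Set.Icc (0 : ℝ) T, K'' (x - y) * h' y = 1 := by
    filter_upwards [hΓh, ae_restrict_mem measurableSet_Icc] with x hx hxI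
    rw [← hInner x hxI h h' hheq]
    exact hx
  have htm : Monotone t := htmono.monotone
  have hIcc : ∀ k : Fin N, Set.Icc (t k.castSucc) (t k.succ) ⊆ Set.Icc (0 : ℝ) T := by
    intro k x hx
    have h0 : (0 : ℝ) ≤ t k.castSucc := ht0 ▸ htm (Fin.zero_le _)
    exact ⟨h0.trans hx.1, hx.2.trans ((htm (Fin.le_last _)).trans htT)⟩
  have hΓdef'' : ∀ k l : Fin N,
      Γ k l = ∫ u in (t k.castSucc)..(t k.succ),
          ∫ s in (t l.castSucc)..(t l.succ), K'' (u - s) := by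
    intro k l
    rw [hΓdef k l]
    have hkk : t k.castSucc ≤ t k.succ := (htmono (Fin.castSucc_lt_succ (i := k))).le
    have hll : t l.castSucc ≤ t l.succ := (htmono (Fin.castSucc_lt_succ (i := l))).le
    apply intervalIntegral.integral_congr
    intro u hu
    rw [Set.uIcc_of_le hkk] at hu
    have huI : u ∈ Set.Icc (0 : ℝ) T := hIcc k hu
    show (∫ s in (t l.castSucc)..(t l.succ), K (u - s))
        = ∫ s in (t l.castSucc)..(t l.succ), K'' (u - s)
    apply intervalIntegral.integral_congr_ae
    filter_upwards [hsubeq u] with s hs hsmem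
    rw [Set.uIoc_of_le hll] at hsmem
    have hsI : s ∈ Set.Icc (0 : ℝ) T := hIcc l ⟨hsmem.1.le, hsmem.2⟩
    show K (u - s) = K'' (u - s)
    rw [hs, hpoint u huI s hsI]
  -- apply the auxiliary lemma
  have key := CVD.aux T hT K'' hK''even hK''m hK''int hpos'' h' hh'm hh' hΓh''
    N t ht0 htmono htT Γ hΓdef'' hΓpos z hz
  have e1 : ∫ s in Set.Icc (0 : ℝ) T, h' s = ∫ s in Set.Icc (0 : ℝ) T, h s :=
    integral_congr_ae hheq.symm
  have e2 : ∫ s in (0 : ℝ)..T, h s = ∫ s in Set.Icc (0 : ℝ) T, h s := by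
    rw [intervalIntegral.integral_of_le hT.le, ← integral_Icc_eq_integral_Ioc]
  rw [e2]
  rw [e1] at key
  exact key
end
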